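/- arXiv:2512.17431 — 6 statements merged into one kernel-verified Lean document; each statement's English description precedes it below -/
import Mathlib

section
/- Every nonzero binary cubic form over ℂ is GL₂(ℂ)-equivalent to exactly one of the three canonical forms x³, x³ + y³, and 3x²y; in particular these three forms are pairwise GL₂(ℂ)-inequivalent. -/
/-- Two binary forms over ℂ (as functions) are GL₂(ℂ)-equivalent if one is obtained from
the other by an invertible linear change of variables. -/
def CubicGL2EquivC (f g : ℂ → ℂ → ℂ) : Prop :=
  ∃ p11 p12 p21 p22 : ℂ, p11 * p22 - p12 * p21 ≠ 0 ∧
    ∀ u v : ℂ, g u v = f (p11 * u + p12 * v) (p21 * u + p22 * v)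

/-!
Over ℂ every binary cubic form is a product of three linear forms, and the three normal forms
`x³`, `3x²y`, `x³ + y³` correspond to a triple, a double and three distinct linear factors.
After moving one root to `(1 : 0)`, the form is `y (b x² + c x y + d y²)`; which of `b`, `c` and
the discriminant `c² - 4bd` vanish decides the normal form, reached by completing the square.
Inequivalence is checked by comparing coefficients after a general linear change of variables.
-/

def binaryCubic (a b c d : ℂ) : ℂ → ℂ → ℂ :=
  fun x y => a * x ^ 3 + b * x ^ 2 * y + c * x * y ^ 2 + d * y ^ 3

namespace CubicGL2EquivC

theorem refl (f : ℂ → ℂ → ℂ) : CubicGL2EquivC f f :=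
  ⟨1, 0, 0, 1, by norm_num, fun u v => by simp⟩

theorem symm {f g : ℂ → ℂ → ℂ} (h : CubicGL2EquivC f g) : CubicGL2EquivC g f := by
  obtain ⟨p, q, r, s, hD, he⟩ := h
  set D := p * s - q * r
  refine ⟨s / D, -q / D, -r / D, p / D, ?_, fun u v => ?_⟩
  · have hdet : s / D * (p / D) - -q / D * (-r / D) = 1 / D := by
      field_simp
      ring
    rw [hdet]
    exact one_div_ne_zero hD
  · rw [he]
    congr 1 <;> field_simp <;> ring

theorem trans {f g k : ℂ → ℂ → ℂ} (hfg : CubicGL2EquivC f g) (hgk : CubicGL2EquivC g k) :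
    CubicGL2EquivC f k := by
  obtain ⟨p, q, r, s, hD, he⟩ := hfg
  obtain ⟨p', q', r', s', hD', he'⟩ := hgk
  refine ⟨p * p' + q * r', p * q' + q * s', r * p' + s * r', r * q' + s * s', ?_, fun u v => ?_⟩
  · have hdet : (p * p' + q * r') * (r * q' + s * s') - (p * q' + q * s') * (r * p' + s * r')
        = (p * s - q * r) * (p' * s' - q' * r') := by ring
    rw [hdet]
    exact mul_ne_zero hD hD'
  · rw [he', he]
    congr 1 <;> ring

theorem exactly_one {f g₁ g₂ g₃ : ℂ → ℂ → ℂ} (h₁₂ : ¬ CubicGL2EquivC g₁ g₂)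
    (h₁₃ : ¬ CubicGL2EquivC g₁ g₃) (h₂₃ : ¬ CubicGL2EquivC g₂ g₃)
    (h : CubicGL2EquivC f g₁ ∨ CubicGL2EquivC f g₂ ∨ CubicGL2EquivC f g₃) :
    (CubicGL2EquivC f g₁ ∧ ¬ CubicGL2EquivC f g₂ ∧ ¬ CubicGL2EquivC f g₃) ∨
      (¬ CubicGL2EquivC f g₁ ∧ CubicGL2EquivC f g₂ ∧ ¬ CubicGL2EquivC f g₃) ∨
      (¬ CubicGL2EquivC f g₁ ∧ ¬ CubicGL2EquivC f g₂ ∧ CubicGL2EquivC f g₃) := by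
  rcases h with h | h | h
  · exact .inl ⟨h, fun h₂ => h₁₂ (h.symm.trans h₂), fun h₃ => h₁₃ (h.symm.trans h₃)⟩
  · exact .inr (.inl ⟨fun h₁ => h₁₂ (h₁.symm.trans h), h, fun h₃ => h₂₃ (h.symm.trans h₃)⟩)
  · exact .inr (.inr ⟨fun h₁ => h₁₃ (h₁.symm.trans h), fun h₂ => h₂₃ (h₂.symm.trans h), h⟩)

end CubicGL2EquivC

theorem binaryCubic_coeffs_eq {a b c d a' b' c' d' : ℂ}
    (h : ∀ u v, binaryCubic a b c d u v = binaryCubic a' b' c' d' u v) :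
    a = a' ∧ b = b' ∧ c = c' ∧ d = d' := by
  have h10 := h 1 0
  have h01 := h 0 1
  have h11 := h 1 1
  have h1m := h 1 (-1)
  simp only [binaryCubic] at h10 h01 h11 h1m
  refine ⟨by linear_combination h10, by linear_combination (h11 - h1m - 2 * h01) / 2,
    by linear_combination (h11 + h1m - 2 * h10) / 2, by linear_combination h01⟩

theorem cube_not_equiv_sum_cubes :
    ¬ CubicGL2EquivC (fun x _y => x ^ 3) (fun x y => x ^ 3 + y ^ 3) := by
  rintro ⟨p, q, r, s, -, he⟩
  obtain ⟨hp, hpq, -, hq⟩ := binaryCubic_coeffs_eq (a := 1) (b := 0) (c := 0) (d := 1)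
    (a' := p ^ 3) (b' := 3 * p ^ 2 * q) (c' := 3 * p * q ^ 2) (d' := q ^ 3)
    (fun u v => by simp only [binaryCubic]; linear_combination he u v)
  have hp0 : p ≠ 0 := by rintro rfl; norm_num at hp
  have hq0 : q = 0 := by simpa [hp0] using hpq.symm
  simp [hq0] at hq

theorem cube_not_equiv_three_sq_mul :
    ¬ CubicGL2EquivC (fun x _y => x ^ 3) (fun x y => 3 * x ^ 2 * y) := by
  rintro ⟨p, q, r, s, hD, he⟩
  obtain ⟨hp, -, -, hq⟩ := binaryCubic_coeffs_eq (a := 0) (b := 3) (c := 0) (d := 0)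
    (a' := p ^ 3) (b' := 3 * p ^ 2 * q) (c' := 3 * p * q ^ 2) (d' := q ^ 3)
    (fun u v => by simp only [binaryCubic]; linear_combination he u v)
  obtain rfl : p = 0 := pow_eq_zero_iff three_ne_zero |>.mp hp.symm
  obtain rfl : q = 0 := pow_eq_zero_iff three_ne_zero |>.mp hq.symm
  simp at hD

theorem sum_cubes_not_equiv_three_sq_mul :
    ¬ CubicGL2EquivC (fun x y => x ^ 3 + y ^ 3) (fun x y => 3 * x ^ 2 * y) := by
  rintro ⟨p, q, r, s, hD, he⟩
  obtain ⟨hpr, hpqrs, hpqrs', hqs⟩ := binaryCubic_coeffs_eq (a := 0) (b := 3) (c := 0) (d := 0)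
    (a' := p ^ 3 + r ^ 3) (b' := 3 * (p ^ 2 * q + r ^ 2 * s)) (c' := 3 * (p * q ^ 2 + r * s ^ 2))
    (d' := q ^ 3 + s ^ 3)
    (fun u v => by simp only [binaryCubic]; linear_combination he u v)
  -- `(p²q)(pq²) = p³q³ = r³s³` and `= (1 - r²s)(-rs²)`, hence `rs² = 0`
  have hrs : r * s ^ 2 = 0 := by
    linear_combination (-(p * q ^ 2) / 3) * hpqrs + ((r ^ 2 * s - 1) / 3) * hpqrs'
      + q ^ 3 * hpr - r ^ 3 * hqs
  rcases mul_eq_zero.mp hrs with rfl | hs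
  · obtain rfl : p = 0 := pow_eq_zero_iff three_ne_zero |>.mp (by simpa using hpr.symm)
    simp at hD
  · obtain rfl : s = 0 := pow_eq_zero_iff two_ne_zero |>.mp hs
    obtain rfl : q = 0 := pow_eq_zero_iff three_ne_zero |>.mp (by simpa using hqs.symm)
    simp at hD

open Polynomial in
theorem exists_equiv_binaryCubic_y_mul {a b c d : ℂ} (h : ¬(a = 0 ∧ b = 0 ∧ c = 0 ∧ d = 0)) :
    ∃ b' c' d' : ℂ, ¬(b' = 0 ∧ c' = 0 ∧ d' = 0) ∧
      CubicGL2EquivC (binaryCubic a b c d) (binaryCubic 0 b' c' d') := by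
  by_cases ha : a = 0
  · subst ha
    exact ⟨b, c, d, fun h' => h ⟨rfl, h'⟩, .refl _⟩
  obtain ⟨r, hr⟩ := Complex.exists_root (f := C a * X ^ 3 + C b * X ^ 2 + C c * X + C d)
    (by rw [degree_cubic ha]; norm_num)
  have hr' : a * r ^ 3 + b * r ^ 2 + c * r + d = 0 := by simpa using hr
  -- the root `(r : 1)` is moved to `(1 : 0)`
  refine ⟨3 * a * r ^ 2 + 2 * b * r + c, 3 * a * r + b, a, fun h' => ha h'.2.2,
    r, 1, 1, 0, by norm_num, fun u v => ?_⟩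
  simp only [binaryCubic]
  linear_combination -u ^ 3 * hr'

theorem binaryCubic_y_cube_equiv_cube {d : ℂ} (hd : d ≠ 0) :
    CubicGL2EquivC (binaryCubic 0 0 0 d) (fun x _y => x ^ 3) := by
  obtain ⟨t, ht⟩ := IsAlgClosed.exists_pow_nat_eq d⁻¹ three_pos
  have hdt : d * t ^ 3 = 1 := by rw [ht]; field_simp
  have ht0 : t ≠ 0 := by rintro rfl; norm_num at hdt
  refine ⟨0, 1, t, 0, by simpa using ht0, fun u v => ?_⟩
  simp only [binaryCubic]
  linear_combination -u ^ 3 * hdt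

theorem binaryCubic_y_sq_mul_equiv_three_sq_mul {c d : ℂ} (hc : c ≠ 0) :
    CubicGL2EquivC (binaryCubic 0 0 c d) (fun x y => 3 * x ^ 2 * y) := by
  refine ⟨-d / c, 3 / c, 1, 0, by simpa using hc, fun u v => ?_⟩
  simp only [binaryCubic]
  field_simp
  ring

theorem binaryCubic_x_sq_y_equiv_three_sq_mul {b : ℂ} (hb : b ≠ 0) :
    CubicGL2EquivC (binaryCubic 0 b 0 0) (fun x y => 3 * x ^ 2 * y) := by
  refine ⟨1, 0, 0, 3 / b, by simpa using hb, fun u v => ?_⟩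
  simp only [binaryCubic]
  field_simp
  ring

theorem binaryCubic_x_sq_y_add_y_cube_equiv_sum_cubes {b e : ℂ} (hb : b ≠ 0) (he : e ≠ 0) :
    CubicGL2EquivC (binaryCubic 0 b 0 e) (fun x y => x ^ 3 + y ^ 3) := by
  -- `u³ + v³ = (u + v) (3 (u - v)² + (u + v)²) / 4`, matched by `x = γ (u - v)`, `y = α (u + v)`
  obtain ⟨α, hα⟩ := IsAlgClosed.exists_pow_nat_eq (4 * e)⁻¹ three_pos
  have heα : e * α ^ 3 = 1 / 4 := by rw [hα]; field_simp
  have hα0 : α ≠ 0 := by rintro rfl; norm_num at heα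
  obtain ⟨γ, hγ⟩ := IsAlgClosed.exists_pow_nat_eq (3 / (4 * b * α)) two_pos
  have hbγα : b * γ ^ 2 * α = 3 / 4 := by rw [hγ]; field_simp
  have hγ0 : γ ≠ 0 := by rintro rfl; norm_num at hbγα
  refine ⟨γ, -γ, α, α, ?_, fun u v => ?_⟩
  · have hdet : γ * α - -γ * α = 2 * γ * α := by ring
    rw [hdet]
    exact mul_ne_zero (mul_ne_zero two_ne_zero hγ0) hα0
  · simp only [binaryCubic]
    linear_combination (-(u + v) * (u - v) ^ 2) * hbγα - (u + v) ^ 3 * heα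

theorem binaryCubic_y_mul_equiv_complete_square {b c d : ℂ} (hb : b ≠ 0) :
    CubicGL2EquivC (binaryCubic 0 b c d) (binaryCubic 0 b 0 (d - c ^ 2 / (4 * b))) := by
  refine ⟨1, -c / (2 * b), 0, 1, by norm_num, fun u v => ?_⟩
  simp only [binaryCubic]
  field_simp
  ring

theorem binaryCubic_equiv_normal_form {a b c d : ℂ} (h : ¬(a = 0 ∧ b = 0 ∧ c = 0 ∧ d = 0)) :
    CubicGL2EquivC (binaryCubic a b c d) (fun x _y => x ^ 3) ∨
      CubicGL2EquivC (binaryCubic a b c d) (fun x y => x ^ 3 + y ^ 3) ∨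
      CubicGL2EquivC (binaryCubic a b c d) (fun x y => 3 * x ^ 2 * y) := by
  obtain ⟨b, c, d, hne, hf⟩ := exists_equiv_binaryCubic_y_mul h
  by_cases hb : b = 0
  · subst hb
    by_cases hc : c = 0
    · subst hc
      exact .inl (hf.trans (binaryCubic_y_cube_equiv_cube fun hd => hne ⟨rfl, rfl, hd⟩))
    · exact .inr (.inr (hf.trans (binaryCubic_y_sq_mul_equiv_three_sq_mul hc)))
  have hsq := hf.trans (binaryCubic_y_mul_equiv_complete_square hb)
  by_cases he : d - c ^ 2 / (4 * b) = 0
  · rw [he] at hsq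
    exact .inr (.inr (hsq.trans (binaryCubic_x_sq_y_equiv_three_sq_mul hb)))
  · exact .inr (.inl (hsq.trans (binaryCubic_x_sq_y_add_y_cube_equiv_sum_cubes hb he)))

/-- Every nonzero binary cubic over ℂ is GL₂(ℂ)-equivalent to exactly one of
`x³`, `x³ + y³`, `3x²y`; in particular these three are pairwise inequivalent. -/
theorem stmt6 :
    (∀ a b c d : ℂ, ¬(a = 0 ∧ b = 0 ∧ c = 0 ∧ d = 0) →
      ((CubicGL2EquivC (fun x y => a * x ^ 3 + b * x ^ 2 * y + c * x * y ^ 2 + d * y ^ 3)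
          (fun x _y => x ^ 3) ∧
        ¬ CubicGL2EquivC (fun x y => a * x ^ 3 + b * x ^ 2 * y + c * x * y ^ 2 + d * y ^ 3)
          (fun x y => x ^ 3 + y ^ 3) ∧
        ¬ CubicGL2EquivC (fun x y => a * x ^ 3 + b * x ^ 2 * y + c * x * y ^ 2 + d * y ^ 3)
          (fun x y => 3 * x ^ 2 * y)) ∨
       (¬ CubicGL2EquivC (fun x y => a * x ^ 3 + b * x ^ 2 * y + c * x * y ^ 2 + d * y ^ 3)
          (fun x _y => x ^ 3) ∧
        CubicGL2EquivC (fun x y => a * x ^ 3 + b * x ^ 2 * y + c * x * y ^ 2 + d * y ^ 3)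
          (fun x y => x ^ 3 + y ^ 3) ∧
        ¬ CubicGL2EquivC (fun x y => a * x ^ 3 + b * x ^ 2 * y + c * x * y ^ 2 + d * y ^ 3)
          (fun x y => 3 * x ^ 2 * y)) ∨
       (¬ CubicGL2EquivC (fun x y => a * x ^ 3 + b * x ^ 2 * y + c * x * y ^ 2 + d * y ^ 3)
          (fun x _y => x ^ 3) ∧
        ¬ CubicGL2EquivC (fun x y => a * x ^ 3 + b * x ^ 2 * y + c * x * y ^ 2 + d * y ^ 3)
          (fun x y => x ^ 3 + y ^ 3) ∧
        CubicGL2EquivC (fun x y => a * x ^ 3 + b * x ^ 2 * y + c * x * y ^ 2 + d * y ^ 3)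
          (fun x y => 3 * x ^ 2 * y)))) ∧
    ¬ CubicGL2EquivC (fun x _y => x ^ 3) (fun x y => x ^ 3 + y ^ 3) ∧
    ¬ CubicGL2EquivC (fun x _y => x ^ 3) (fun x y => 3 * x ^ 2 * y) ∧
    ¬ CubicGL2EquivC (fun x y => x ^ 3 + y ^ 3) (fun x y => 3 * x ^ 2 * y) := by
  refine ⟨fun a b c d h => ?_, cube_not_equiv_sum_cubes, cube_not_equiv_three_sq_mul,
    sum_cubes_not_equiv_three_sq_mul⟩
  exact CubicGL2EquivC.exactly_one cube_not_equiv_sum_cubes cube_not_equiv_three_sq_mul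
    sum_cubes_not_equiv_three_sq_mul (binaryCubic_equiv_normal_form h)
end

section
/- The binary cubics f₁(x,y) = x³ + y³ and f₂(x,y) = x³ − 3xy² are not GL₂(ℝ)-equivalent, i.e. there is no invertible real 2×2 matrix P with f₂(u,v) = f₁(p₁₁u + p₁₂v, p₂₁u + p₂₂v); nevertheless their associated 2×2×2 symmetric tensors have identical spectral data: the tensor of f₁ has exactly three eigenpair classes, represented by (1,(1,1)), (1,(0,1)) and (1,(1,0)), and the tensor of f₂ has exactly three eigenpair classes, represented by (1,(1,0)), (1,(−1/2, √3/2)) and (1,(−1/2, −√3/2)), with no eigenpair class of either tensor having eigenvalue zero. -/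
/-- `(lam, (x, y))` is an eigenpair of the 2×2×2 complex symmetric tensor associated with
the binary cubic `a x³ + 3b x²y + 3c xy² + d y³`. -/
def IsCubicEigenpair (a b c d lam x y : ℂ) : Prop :=
  (x, y) ≠ (0, 0) ∧
  a * x ^ 2 + 2 * b * x * y + c * y ^ 2 = lam * x ∧
  b * x ^ 2 + 2 * c * x * y + d * y ^ 2 = lam * y

/-- Equivalence of eigenpairs of a third-order tensor. -/
def CubicEigenpairEquiv (lam x y lam' x' y' : ℂ) : Prop :=
  ∃ t : ℂ, t ≠ 0 ∧ t * lam = lam' ∧ t * x = x' ∧ t * y = y'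

/-- GL₂(ℝ)-equivalence of real binary forms (as functions). -/
def CubicGL2EquivR (f g : ℝ → ℝ → ℝ) : Prop :=
  ∃ p11 p12 p21 p22 : ℝ, p11 * p22 - p12 * p21 ≠ 0 ∧
    ∀ u v : ℝ, g u v = f (p11 * u + p12 * v) (p21 * u + p22 * v)

/-!
Over `ℝ`, the form `x³ + y³ = (x + y)(x² - xy + y²)` vanishes only on the line `x + y = 0`, whereas
`x³ - 3xy² = x(x - √3 y)(x + √3 y)` vanishes at the two independent points `(0, 1)` and `(√3, 1)`.
A linear change of variables carries zeros of the second form to zeros of the first; both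
images then lie on one line, which forces the matrix to be singular.

The eigen-equations of both tensors are solved by hand: no eigenvalue is zero, so every eigenpair
`(λ, v)` is equivalent to `(1, v / λ)`, and eigenpairs with the same eigenvalue are equivalent only
when they are equal. Hence the classes are the solutions with `λ = 1`.
-/

lemma add_eq_zero_of_pow_three_add_pow_three_eq_zero {R : Type*} [Ring R] [LinearOrder R]
    [IsStrictOrderedRing R] {x y : R} (h : x ^ 3 + y ^ 3 = 0) : x + y = 0 := by
  have hcube : x ^ 3 = (-y) ^ 3 := by rw [Odd.neg_pow (by decide), eq_neg_of_add_eq_zero_left h]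
  rw [(Odd.strictMono_pow (by decide : Odd 3)).injective hcube, neg_add_cancel]

lemma not_cubicGL2EquivR_of_zeros {f g : ℝ → ℝ → ℝ} {α β : ℝ} (hαβ : (α, β) ≠ (0, 0))
    (hf : ∀ x y, f x y = 0 → α * x + β * y = 0) {u₁ v₁ u₂ v₂ : ℝ}
    (huv : u₁ * v₂ - u₂ * v₁ ≠ 0) (hg₁ : g u₁ v₁ = 0) (hg₂ : g u₂ v₂ = 0) :
    ¬ CubicGL2EquivR f g := by
  rintro ⟨p11, p12, p21, p22, hdet, hfg⟩
  have h₁ := hf _ _ ((hfg u₁ v₁).symm.trans hg₁)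
  have h₂ := hf _ _ ((hfg u₂ v₂).symm.trans hg₂)
  -- `(α, β)` is orthogonal to both image points, so these are proportional
  have hprod : (p11 * p22 - p12 * p21) * (u₁ * v₂ - u₂ * v₁) = 0 := by
    by_cases hα : α = 0
    · have hβ : β ≠ 0 := fun hβ => hαβ (by rw [hα, hβ])
      refine (mul_right_inj' hβ).mp ?_
      linear_combination (p11 * u₁ + p12 * v₁) * h₂ - (p11 * u₂ + p12 * v₂) * h₁
    · refine (mul_right_inj' hα).mp ?_
      linear_combination (p21 * u₂ + p22 * v₂) * h₁ - (p21 * u₁ + p22 * v₁) * h₂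
  exact mul_ne_zero hdet huv hprod

lemma not_cubicGL2EquivR_sum_cubes_x_cube_sub_three_x_y_sq :
    ¬ CubicGL2EquivR (fun x y => x ^ 3 + y ^ 3) (fun x y => x ^ 3 - 3 * x * y ^ 2) := by
  have hs : Real.sqrt 3 ^ 2 = 3 := Real.sq_sqrt (by norm_num)
  refine not_cubicGL2EquivR_of_zeros (α := 1) (β := 1) (u₁ := 0) (v₁ := 1) (u₂ := Real.sqrt 3)
    (v₂ := 1) (by simp)
    (fun x y h => by simpa using add_eq_zero_of_pow_three_add_pow_three_eq_zero h)
    (by simp) (by simp) ?_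
  linear_combination Real.sqrt 3 * hs

lemma CubicEigenpairEquiv.of_eq_smul {lam x y : ℂ} {p : ℂ × ℂ} (hlam : lam ≠ 0)
    (h : (x, y) = lam • p) : CubicEigenpairEquiv lam x y 1 p.1 p.2 := by
  obtain ⟨x₀, y₀⟩ := p
  simp only [Prod.smul_mk, smul_eq_mul, Prod.mk.injEq] at h
  obtain ⟨rfl, rfl⟩ := h
  exact ⟨lam⁻¹, inv_ne_zero hlam, inv_mul_cancel₀ hlam, inv_mul_cancel_left₀ hlam x₀,
    inv_mul_cancel_left₀ hlam y₀⟩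

lemma cubicEigenpairEquiv_or_of_eq_smul_or {lam x y : ℂ} {p q r : ℂ × ℂ} (hlam : lam ≠ 0)
    (h : (x, y) = lam • p ∨ (x, y) = lam • q ∨ (x, y) = lam • r) :
    CubicEigenpairEquiv lam x y 1 p.1 p.2 ∨ CubicEigenpairEquiv lam x y 1 q.1 q.2 ∨
      CubicEigenpairEquiv lam x y 1 r.1 r.2 :=
  h.imp (.of_eq_smul hlam) (Or.imp (.of_eq_smul hlam) (.of_eq_smul hlam))

lemma CubicEigenpairEquiv.eq_of_eigenvalue_eq {lam x y x' y' : ℂ} (hlam : lam ≠ 0)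
    (h : CubicEigenpairEquiv lam x y lam x' y') : x = x' ∧ y = y' := by
  obtain ⟨t, -, hlt, hx, hy⟩ := h
  obtain rfl : t = 1 := (mul_left_inj' hlam).mp (hlt.trans (one_mul lam).symm)
  exact ⟨(one_mul x).symm.trans hx, (one_mul y).symm.trans hy⟩

lemma isCubicEigenpair_one_zero_zero_one_iff {lam x y : ℂ} :
    IsCubicEigenpair 1 0 0 1 lam x y ↔ lam ≠ 0 ∧
      ((x, y) = lam • (1, 1) ∨ (x, y) = lam • (0, 1) ∨ (x, y) = lam • (1, 0)) := by
  simp only [IsCubicEigenpair, Prod.smul_mk, smul_eq_mul, mul_one, mul_zero, Prod.mk.injEq,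
    ne_eq, not_and]
  constructor
  · rintro ⟨hne, hx, hy⟩
    have hx' : x * (x - lam) = 0 := by linear_combination hx
    have hy' : y * (y - lam) = 0 := by linear_combination hy
    rcases mul_eq_zero.mp hx' with rfl | hxl <;> rcases mul_eq_zero.mp hy' with rfl | hyl
    · exact absurd rfl (hne rfl)
    · obtain rfl : y = lam := sub_eq_zero.mp hyl
      exact ⟨hne rfl, by simp⟩
    · obtain rfl : x = lam := sub_eq_zero.mp hxl
      exact ⟨fun h => hne h rfl, by simp⟩
    · obtain rfl : x = lam := sub_eq_zero.mp hxl
      obtain rfl : y = x := sub_eq_zero.mp hyl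
      exact ⟨fun h => hne h h, by simp⟩
  · rintro ⟨hlam, ⟨rfl, rfl⟩ | ⟨rfl, rfl⟩ | ⟨rfl, rfl⟩⟩ <;>
      exact ⟨by simp [hlam], by ring, by ring⟩

lemma isCubicEigenpair_one_zero_neg_one_zero_iff {lam x y : ℂ} :
    IsCubicEigenpair 1 0 (-1) 0 lam x y ↔ lam ≠ 0 ∧
      ((x, y) = lam • (1, 0) ∨
        (x, y) = lam • (-(1/2), (Real.sqrt 3 : ℂ) / 2) ∨
        (x, y) = lam • (-(1/2), -((Real.sqrt 3 : ℂ) / 2))) := by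
  have hs : (Real.sqrt 3 : ℂ) ^ 2 = 3 := by
    rw [← Complex.ofReal_pow, Real.sq_sqrt (by norm_num : (0 : ℝ) ≤ 3), Complex.ofReal_ofNat]
  simp only [IsCubicEigenpair, Prod.smul_mk, smul_eq_mul, mul_one, mul_zero, Prod.mk.injEq,
    ne_eq, not_and]
  constructor
  · rintro ⟨hne, hx, hy⟩
    have hy' : y * (lam + 2 * x) = 0 := by linear_combination -hy
    rcases mul_eq_zero.mp hy' with rfl | hl
    · have hx' : x * (x - lam) = 0 := by linear_combination hx
      rcases mul_eq_zero.mp hx' with rfl | hxl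
      · exact absurd rfl (hne rfl)
      · obtain rfl : x = lam := sub_eq_zero.mp hxl
        exact ⟨fun h => hne h rfl, by simp⟩
    · obtain rfl : lam = -2 * x := by linear_combination hl
      -- with `lam = -2x` the first eigen-equation reads `y² = 3x²`
      have hyx : (y + Real.sqrt 3 * x) * (y - Real.sqrt 3 * x) = 0 := by
        linear_combination -hx - x ^ 2 * hs
      have hx0 : x ≠ 0 := by
        rintro rfl
        exact hne rfl (pow_eq_zero_iff two_ne_zero |>.mp (by linear_combination -hx))
      refine ⟨mul_ne_zero (by norm_num) hx0, Or.inr ?_⟩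
      rcases mul_eq_zero.mp hyx with h | h
      · exact Or.inl ⟨by ring, by linear_combination h⟩
      · exact Or.inr ⟨by ring, by linear_combination h⟩
  · rintro ⟨hlam, ⟨rfl, rfl⟩ | ⟨rfl, rfl⟩ | ⟨rfl, rfl⟩⟩
    · exact ⟨by simp [hlam], by ring, by ring⟩
    · exact ⟨by simp [hlam], by linear_combination -lam ^ 2 / 4 * hs, by ring⟩
    · exact ⟨by simp [hlam], by linear_combination -lam ^ 2 / 4 * hs, by ring⟩

/-- `f₁ = x³ + y³` and `f₂ = x³ − 3xy²` are not GL₂(ℝ)-equivalent, yet their tensors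
have identical spectral data: each has exactly three eigenpair classes (with the listed
representatives) and no eigenpair class with eigenvalue zero.  Here `f₁` has cubic
coefficients `(a,b,c,d) = (1,0,0,1)` and `f₂` has `(a,b,c,d) = (1,0,−1,0)`. -/
theorem stmt7 :
    ¬ CubicGL2EquivR (fun x y => x ^ 3 + y ^ 3) (fun x y => x ^ 3 - 3 * x * y ^ 2) ∧
    -- spectral data of the tensor of f₁ = x³ + y³
    (IsCubicEigenpair 1 0 0 1 1 1 1 ∧
     IsCubicEigenpair 1 0 0 1 1 0 1 ∧
     IsCubicEigenpair 1 0 0 1 1 1 0 ∧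
     ¬ CubicEigenpairEquiv 1 1 1 1 0 1 ∧
     ¬ CubicEigenpairEquiv 1 1 1 1 1 0 ∧
     ¬ CubicEigenpairEquiv 1 0 1 1 1 0 ∧
     (∀ lam x y : ℂ, IsCubicEigenpair 1 0 0 1 lam x y →
        CubicEigenpairEquiv lam x y 1 1 1 ∨ CubicEigenpairEquiv lam x y 1 0 1 ∨
          CubicEigenpairEquiv lam x y 1 1 0) ∧
     (∀ lam x y : ℂ, IsCubicEigenpair 1 0 0 1 lam x y → lam ≠ 0)) ∧
    -- spectral data of the tensor of f₂ = x³ − 3xy²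
    (IsCubicEigenpair 1 0 (-1) 0 1 1 0 ∧
     IsCubicEigenpair 1 0 (-1) 0 1 (-(1/2)) ((Real.sqrt 3 : ℂ) / 2) ∧
     IsCubicEigenpair 1 0 (-1) 0 1 (-(1/2)) (-((Real.sqrt 3 : ℂ) / 2)) ∧
     ¬ CubicEigenpairEquiv 1 1 0 1 (-(1/2)) ((Real.sqrt 3 : ℂ) / 2) ∧
     ¬ CubicEigenpairEquiv 1 1 0 1 (-(1/2)) (-((Real.sqrt 3 : ℂ) / 2)) ∧
     ¬ CubicEigenpairEquiv 1 (-(1/2)) ((Real.sqrt 3 : ℂ) / 2)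
        1 (-(1/2)) (-((Real.sqrt 3 : ℂ) / 2)) ∧
     (∀ lam x y : ℂ, IsCubicEigenpair 1 0 (-1) 0 lam x y →
        CubicEigenpairEquiv lam x y 1 1 0 ∨
          CubicEigenpairEquiv lam x y 1 (-(1/2)) ((Real.sqrt 3 : ℂ) / 2) ∨
          CubicEigenpairEquiv lam x y 1 (-(1/2)) (-((Real.sqrt 3 : ℂ) / 2))) ∧
     (∀ lam x y : ℂ, IsCubicEigenpair 1 0 (-1) 0 lam x y → lam ≠ 0)) := by
  refine ⟨not_cubicGL2EquivR_sum_cubes_x_cube_sub_three_x_y_sq, ⟨?_, ?_, ?_, ?_, ?_, ?_, ?_, ?_⟩,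
    ⟨?_, ?_, ?_, ?_, ?_, ?_, ?_, ?_⟩⟩
  · exact isCubicEigenpair_one_zero_zero_one_iff.mpr ⟨one_ne_zero, by simp⟩
  · exact isCubicEigenpair_one_zero_zero_one_iff.mpr ⟨one_ne_zero, by simp⟩
  · exact isCubicEigenpair_one_zero_zero_one_iff.mpr ⟨one_ne_zero, by simp⟩
  · exact fun h => absurd (h.eq_of_eigenvalue_eq one_ne_zero) (by norm_num)
  · exact fun h => absurd (h.eq_of_eigenvalue_eq one_ne_zero) (by norm_num)
  · exact fun h => absurd (h.eq_of_eigenvalue_eq one_ne_zero) (by norm_num)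
  · exact fun _ _ _ h =>
      (isCubicEigenpair_one_zero_zero_one_iff.mp h).elim cubicEigenpairEquiv_or_of_eq_smul_or
  · exact fun _ _ _ h => (isCubicEigenpair_one_zero_zero_one_iff.mp h).1
  · exact isCubicEigenpair_one_zero_neg_one_zero_iff.mpr ⟨one_ne_zero, by simp⟩
  · exact isCubicEigenpair_one_zero_neg_one_zero_iff.mpr ⟨one_ne_zero, by simp⟩
  · exact isCubicEigenpair_one_zero_neg_one_zero_iff.mpr ⟨one_ne_zero, by simp⟩
  · exact fun h => absurd (h.eq_of_eigenvalue_eq one_ne_zero).1 (by norm_num)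
  · exact fun h => absurd (h.eq_of_eigenvalue_eq one_ne_zero).1 (by norm_num)
  · have hs : (Real.sqrt 3 : ℂ) ≠ 0 := by simp
    exact fun h => hs (by linear_combination (h.eq_of_eigenvalue_eq one_ne_zero).2)
  · exact fun _ _ _ h =>
      (isCubicEigenpair_one_zero_neg_one_zero_iff.mp h).elim cubicEigenpairEquiv_or_of_eq_smul_or
  · exact fun _ _ _ h => (isCubicEigenpair_one_zero_neg_one_zero_iff.mp h).1
end

section
/- Let μ ∈ ℂ with μ ≠ 1/3 and μ ≠ −1/3, let P = (p₁, p₂; p₃, p₄) be an invertible 2×2 complex matrix, and let g(u,v) = (p₁u + p₂v)⁴ + 6μ(p₁u + p₂v)²(p₃u + p₄v)² + (p₃u + p₄v)⁴. Then the gradient of g vanishes only at (u,v) = (0,0); consequently no eigenpair of the 2×2×2×2 symmetric tensor associated with g has eigenvalue zero. -/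
/-- `(lam, (x, y))` is an eigenpair of the 2×2×2×2 complex symmetric tensor associated with
the binary quartic `a x⁴ + 4b x³y + 6c x²y² + 4d xy³ + e y⁴`. -/
def IsQuarticEigenpair (a b c d e lam x y : ℂ) : Prop :=
  (x, y) ≠ (0, 0) ∧
  a * x ^ 3 + 3 * b * x ^ 2 * y + 3 * c * x * y ^ 2 + d * y ^ 3 = lam * x ∧
  b * x ^ 3 + 3 * c * x ^ 2 * y + 3 * d * x * y ^ 2 + e * y ^ 3 = lam * y

/-!
Writing `s = p₁u + p₂v`, `t = p₃u + p₄v`, the form is `g = h ∘ P` with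
`h(s,t) = s⁴ + 6μs²t² + t⁴`, so `∇g(u,v) = Pᵀ ∇h(s,t)` and
`∇h = 4 (s(s² + 3μt²), t(t² + 3μs²))`. As `P` is invertible, `∇g` vanishes only where
`∇h` does. If `s, t ≠ 0` there, then `s² = -3μt²` and `t² = -3μs²`, so
`(1 - 9μ²)s² = 0`, which `μ ≠ ±1/3` excludes; hence `s = t = 0` and so `u = v = 0`.
An eigenpair with eigenvalue `0` is a nonzero point where `∇g` vanishes.
-/

theorem eq_zero_and_eq_zero_of_det_ne_zero {R : Type*} [CommRing R] [IsDomain R]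
    {a b c d x y : R} (hdet : a * d - b * c ≠ 0)
    (h₁ : a * x + b * y = 0) (h₂ : c * x + d * y = 0) : x = 0 ∧ y = 0 := by
  have hx : (a * d - b * c) * x = 0 := by linear_combination d * h₁ - b * h₂
  have hy : (a * d - b * c) * y = 0 := by linear_combination a * h₂ - c * h₁
  exact ⟨(mul_eq_zero.mp hx).resolve_left hdet, (mul_eq_zero.mp hy).resolve_left hdet⟩

theorem one_sub_nine_mul_sq_ne_zero {K : Type*} [Field K] {μ : K}
    (hμ1 : μ ≠ 1 / 3) (hμ2 : μ ≠ -(1 / 3)) : 1 - 9 * μ ^ 2 ≠ 0 := by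
  intro h
  have hfac : (μ * 3 - 1) * (-μ * 3 - 1) = 0 := by linear_combination h
  rcases mul_eq_zero.mp hfac with h' | h'
  · exact hμ1 (eq_one_div_of_mul_eq_one_left (sub_eq_zero.mp h'))
  · exact hμ2 (neg_eq_iff_eq_neg.mp (eq_one_div_of_mul_eq_one_left (sub_eq_zero.mp h')))

theorem eq_zero_and_eq_zero_of_gradient_diagonal_quartic {R : Type*} [CommRing R] [IsDomain R]
    {μ s t : R} (hμ : 1 - 9 * μ ^ 2 ≠ 0)
    (hs : s * (s ^ 2 + 3 * μ * t ^ 2) = 0) (ht : t * (t ^ 2 + 3 * μ * s ^ 2) = 0) :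
    s = 0 ∧ t = 0 := by
  have hs2 : s ^ 2 = 0 := by
    rcases mul_eq_zero.mp hs with hs0 | hs'
    · simp [hs0]
    rcases mul_eq_zero.mp ht with ht0 | ht'
    · simpa [ht0] using hs'
    exact (mul_eq_zero.mp (by linear_combination hs' - 3 * μ * ht' :
      (1 - 9 * μ ^ 2) * s ^ 2 = 0)).resolve_left hμ
  have hs0 : s = 0 := pow_eq_zero_iff two_ne_zero |>.mp hs2
  refine ⟨hs0, ?_⟩
  rcases mul_eq_zero.mp ht with ht0 | ht'
  · exact ht0
  · exact pow_eq_zero_iff two_ne_zero |>.mp (by simpa [hs0] using ht')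

/-- For `g(u,v) = (p₁u + p₂v)⁴ + 6μ(p₁u + p₂v)²(p₃u + p₄v)² + (p₃u + p₄v)⁴` with `P`
invertible and `μ ≠ ±1/3`, the gradient of `g` vanishes only at the origin; consequently
no eigenpair of the associated tensor has eigenvalue zero. -/
theorem stmt11 (μ p1 p2 p3 p4 : ℂ) (hμ1 : μ ≠ 1 / 3) (hμ2 : μ ≠ -(1 / 3))
    (hP : p1 * p4 - p2 * p3 ≠ 0) :
    (∀ u v : ℂ,
      4 * p1 * (p1 * u + p2 * v) ^ 3 +
        12 * μ * (p1 * (p1 * u + p2 * v) * (p3 * u + p4 * v) ^ 2 +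
          p3 * (p1 * u + p2 * v) ^ 2 * (p3 * u + p4 * v)) +
        4 * p3 * (p3 * u + p4 * v) ^ 3 = 0 →
      4 * p2 * (p1 * u + p2 * v) ^ 3 +
        12 * μ * (p2 * (p1 * u + p2 * v) * (p3 * u + p4 * v) ^ 2 +
          p4 * (p1 * u + p2 * v) ^ 2 * (p3 * u + p4 * v)) +
        4 * p4 * (p3 * u + p4 * v) ^ 3 = 0 →
      (u, v) = (0, 0)) ∧
    (∀ lam u v : ℂ,
      IsQuarticEigenpair
        (p1 ^ 4 + 6 * μ * p1 ^ 2 * p3 ^ 2 + p3 ^ 4)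
        (p1 ^ 3 * p2 + 3 * μ * (p1 * p2 * p3 ^ 2 + p1 ^ 2 * p3 * p4) + p3 ^ 3 * p4)
        (p1 ^ 2 * p2 ^ 2 + μ * (p1 ^ 2 * p4 ^ 2 + 4 * p1 * p2 * p3 * p4 + p2 ^ 2 * p3 ^ 2) +
          p3 ^ 2 * p4 ^ 2)
        (p1 * p2 ^ 3 + 3 * μ * (p2 ^ 2 * p3 * p4 + p1 * p2 * p4 ^ 2) + p3 * p4 ^ 3)
        (p2 ^ 4 + 6 * μ * p2 ^ 2 * p4 ^ 2 + p4 ^ 4) lam u v → lam ≠ 0) := by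
  refine (fun gradient_eq_zero => ⟨gradient_eq_zero, ?_⟩) (fun u v h₁ h₂ => ?_)
  · have hPt : p1 * p4 - p3 * p2 ≠ 0 := by rwa [mul_comm p3]
    obtain ⟨hA, hB⟩ := eq_zero_and_eq_zero_of_det_ne_zero hPt
      (x := (p1 * u + p2 * v) * ((p1 * u + p2 * v) ^ 2 + 3 * μ * (p3 * u + p4 * v) ^ 2))
      (y := (p3 * u + p4 * v) * ((p3 * u + p4 * v) ^ 2 + 3 * μ * (p1 * u + p2 * v) ^ 2))
      (by linear_combination h₁ / 4) (by linear_combination h₂ / 4)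
    obtain ⟨hs, ht⟩ := eq_zero_and_eq_zero_of_gradient_diagonal_quartic
      (one_sub_nine_mul_sq_ne_zero hμ1 hμ2) hA hB
    obtain ⟨hu, hv⟩ := eq_zero_and_eq_zero_of_det_ne_zero hP hs ht
    rw [hu, hv]
  · rintro lam u v ⟨hne, h₁, h₂⟩ rfl
    exact hne (gradient_eq_zero u v (by linear_combination 4 * h₁) (by linear_combination 4 * h₂))
end

section
/- Let μ ∈ ℂ with μ ≠ 1/3 and μ ≠ −1/3. The 2×2×2×2 complex symmetric tensor associated with the binary quartic f(x,y) = x⁴ + 6μx²y² + y⁴ has exactly four eigenpair classes, namely the classes of (1,(1,0)), (1,(0,1)), (1+3μ,(1,1)) and (1+3μ,(1,−1)); in particular no eigenpair class has eigenvalue zero. -/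
/-- Equivalence of eigenpairs of a fourth-order tensor. -/
def QuarticEigenpairEquiv (lam x y lam' x' y' : ℂ) : Prop :=
  ∃ t : ℂ, t ≠ 0 ∧ t ^ 2 * lam = lam' ∧ t * x = x' ∧ t * y = y'

section Equiv

variable {lam x y lam' x' y' : ℂ}

lemma quarticEigenpairEquiv_of_eq_mul {c : ℂ} (hc : c ≠ 0) (hlam : lam = c ^ 2 * lam')
    (hx : x = c * x') (hy : y = c * y') : QuarticEigenpairEquiv lam x y lam' x' y' := by
  subst hlam hx hy
  exact ⟨c⁻¹, inv_ne_zero hc, by field_simp, by field_simp, by field_simp⟩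

lemma QuarticEigenpairEquiv.mul_eq_mul (h : QuarticEigenpairEquiv lam x y lam' x' y') :
    x * y' = x' * y := by
  obtain ⟨t, -, -, rfl, rfl⟩ := h
  ring

lemma QuarticEigenpairEquiv.ne_zero (h : QuarticEigenpairEquiv lam x y lam' x' y')
    (hlam' : lam' ≠ 0) : lam ≠ 0 := by
  obtain ⟨t, -, rfl, -, -⟩ := h
  rintro rfl
  simp at hlam'

end Equiv

namespace IsQuarticEigenpair

variable {a c e lam x y : ℂ}

lemma eq_of_fst_ne_zero (h : IsQuarticEigenpair a 0 c 0 e lam x y) (hx : x ≠ 0) :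
    lam = a * x ^ 2 + 3 * c * y ^ 2 :=
  mul_left_cancel₀ hx (by linear_combination -h.2.1)

lemma eq_of_snd_ne_zero (h : IsQuarticEigenpair a 0 c 0 e lam x y) (hy : y ≠ 0) :
    lam = 3 * c * x ^ 2 + e * y ^ 2 :=
  mul_left_cancel₀ hy (by linear_combination -h.2.2)

end IsQuarticEigenpair

theorem quarticEigenpairEquiv_representatives {μ lam x y : ℂ} (hμ : μ ≠ 1 / 3)
    (h : IsQuarticEigenpair 1 0 μ 0 1 lam x y) :
    QuarticEigenpairEquiv lam x y 1 1 0 ∨ QuarticEigenpairEquiv lam x y 1 0 1 ∨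
      QuarticEigenpairEquiv lam x y (1 + 3 * μ) 1 1 ∨
      QuarticEigenpairEquiv lam x y (1 + 3 * μ) 1 (-1) := by
  rcases eq_or_ne y 0 with rfl | hy
  · have hx : x ≠ 0 := by rintro rfl; exact h.1 rfl
    have hlam := h.eq_of_fst_ne_zero hx
    exact Or.inl <| quarticEigenpairEquiv_of_eq_mul hx (by rw [hlam]; ring) (by ring) (by ring)
  rcases eq_or_ne x 0 with rfl | hx
  · have hlam := h.eq_of_snd_ne_zero hy
    exact Or.inr <| Or.inl <|
      quarticEigenpairEquiv_of_eq_mul hy (by rw [hlam]; ring) (by ring) (by ring)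
  have hlam := h.eq_of_fst_ne_zero hx
  have hsq : y ^ 2 = x ^ 2 := by
    have h3μ : (1 : ℂ) - 3 * μ ≠ 0 := by
      intro h0; apply hμ; linear_combination -h0 / 3
    refine mul_left_cancel₀ h3μ ?_
    linear_combination hlam - h.eq_of_snd_ne_zero hy
  rcases sq_eq_sq_iff_eq_or_eq_neg.1 hsq with rfl | rfl
  · exact Or.inr <| Or.inr <| Or.inl <|
      quarticEigenpairEquiv_of_eq_mul hx (by rw [hlam]; ring) (by ring) (by ring)
  · exact Or.inr <| Or.inr <| Or.inr <|
      quarticEigenpairEquiv_of_eq_mul hx (by rw [hlam]; ring) (by ring) (by ring)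

/-- For `μ ≠ ±1/3`, the tensor of `f(x,y) = x⁴ + 6μx²y² + y⁴`
(quartic coefficients `(a,b,c,d,e) = (1,0,μ,0,1)`) has exactly four eigenpair classes,
represented by `(1,(1,0))`, `(1,(0,1))`, `(1+3μ,(1,1))` and `(1+3μ,(1,−1))`;
no class has eigenvalue zero. -/
theorem stmt12 (μ : ℂ) (hμ1 : μ ≠ 1 / 3) (hμ2 : μ ≠ -(1 / 3)) :
    IsQuarticEigenpair 1 0 μ 0 1 1 1 0 ∧
    IsQuarticEigenpair 1 0 μ 0 1 1 0 1 ∧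
    IsQuarticEigenpair 1 0 μ 0 1 (1 + 3 * μ) 1 1 ∧
    IsQuarticEigenpair 1 0 μ 0 1 (1 + 3 * μ) 1 (-1) ∧
    ¬ QuarticEigenpairEquiv 1 1 0 1 0 1 ∧
    ¬ QuarticEigenpairEquiv 1 1 0 (1 + 3 * μ) 1 1 ∧
    ¬ QuarticEigenpairEquiv 1 1 0 (1 + 3 * μ) 1 (-1) ∧
    ¬ QuarticEigenpairEquiv 1 0 1 (1 + 3 * μ) 1 1 ∧
    ¬ QuarticEigenpairEquiv 1 0 1 (1 + 3 * μ) 1 (-1) ∧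
    ¬ QuarticEigenpairEquiv (1 + 3 * μ) 1 1 (1 + 3 * μ) 1 (-1) ∧
    (∀ lam x y : ℂ, IsQuarticEigenpair 1 0 μ 0 1 lam x y →
      QuarticEigenpairEquiv lam x y 1 1 0 ∨ QuarticEigenpairEquiv lam x y 1 0 1 ∨
        QuarticEigenpairEquiv lam x y (1 + 3 * μ) 1 1 ∨
        QuarticEigenpairEquiv lam x y (1 + 3 * μ) 1 (-1)) ∧
    (∀ lam x y : ℂ, IsQuarticEigenpair 1 0 μ 0 1 lam x y → lam ≠ 0) := by
  have h3μ : (1 : ℂ) + 3 * μ ≠ 0 := by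
    intro h0; apply hμ2; linear_combination h0 / 3
  refine ⟨⟨by simp, by ring, by ring⟩, ⟨by simp, by ring, by ring⟩,
    ⟨by simp, by ring, by ring⟩, ⟨by simp, by ring, by ring⟩,
    fun h ↦ absurd h.mul_eq_mul (by norm_num), fun h ↦ absurd h.mul_eq_mul (by norm_num),
    fun h ↦ absurd h.mul_eq_mul (by norm_num), fun h ↦ absurd h.mul_eq_mul (by norm_num),
    fun h ↦ absurd h.mul_eq_mul (by norm_num), fun h ↦ absurd h.mul_eq_mul (by norm_num),
    fun _ _ _ ↦ quarticEigenpairEquiv_representatives hμ1, fun _ _ _ h ↦ ?_⟩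
  rcases quarticEigenpairEquiv_representatives hμ1 h with h | h | h | h
  · exact h.ne_zero one_ne_zero
  · exact h.ne_zero one_ne_zero
  · exact h.ne_zero h3μ
  · exact h.ne_zero h3μ
end

section
/- The 2×2×2×2 complex symmetric tensor associated with the binary quartic f(x,y) = 4x³y has exactly three eigenpair classes, namely the classes of (0,(0,1)), (√3,(1, √3/3)) and (−√3,(1, −√3/3)); in particular exactly one of its eigenpair classes has eigenvalue zero. -/
section General

variable {a b c d e lam x y lam' x' y' : ℂ}

namespace QuarticEigenpairEquiv

theorem fst_eq_zero_iff (h : QuarticEigenpairEquiv lam x y lam' x' y') : x = 0 ↔ x' = 0 := by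
  obtain ⟨t, ht, -, rfl, -⟩ := h
  simp [ht]

theorem lam_eq_of_fst_eq_one (h : QuarticEigenpairEquiv lam 1 y lam' 1 y') : lam = lam' := by
  obtain ⟨t, -, hlam, ht, -⟩ := h
  rw [mul_one] at ht
  simpa [ht] using hlam

theorem of_fst_ne_zero (hx : x ≠ 0) : QuarticEigenpairEquiv lam x y (lam / x ^ 2) 1 (y / x) :=
  ⟨x⁻¹, inv_ne_zero hx, by field_simp, inv_mul_cancel₀ hx, by field_simp⟩

theorem of_snd_ne_zero (hy : y ≠ 0) : QuarticEigenpairEquiv lam x y (lam / y ^ 2) (x / y) 1 :=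
  ⟨y⁻¹, inv_ne_zero hy, by field_simp, by field_simp, inv_mul_cancel₀ hy⟩

end QuarticEigenpairEquiv

theorem IsQuarticEigenpair.of_equiv (h : IsQuarticEigenpair a b c d e lam x y)
    (hequiv : QuarticEigenpairEquiv lam x y lam' x' y') :
    IsQuarticEigenpair a b c d e lam' x' y' := by
  obtain ⟨hne, h₁, h₂⟩ := h
  obtain ⟨t, ht, rfl, rfl, rfl⟩ := hequiv
  refine ⟨?_, by linear_combination t ^ 3 * h₁, by linear_combination t ^ 3 * h₂⟩
  simpa [ht] using hne

end General

section FourXCubeY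

variable {lam x y : ℂ}

theorem isQuarticEigenpair_x3y_lam_eq_zero_iff (h : IsQuarticEigenpair 0 1 0 0 0 lam x y) :
    lam = 0 ↔ x = 0 := by
  obtain ⟨hne, h₁, h₂⟩ := h
  constructor
  · rintro rfl
    exact pow_eq_zero_iff three_ne_zero |>.mp (by linear_combination h₂)
  · rintro rfl
    have hy : y ≠ 0 := fun hy ↦ hne (by simp [hy])
    exact (mul_eq_zero.mp (by linear_combination -h₂ : lam * y = 0)).resolve_right hy

theorem isQuarticEigenpair_x3y_one_iff {u : ℂ} :
    IsQuarticEigenpair 0 1 0 0 0 lam 1 u ↔ lam = 3 * u ∧ u ^ 2 = 1 / 3 := by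
  simp only [IsQuarticEigenpair, ne_eq, Prod.mk.injEq, one_ne_zero, false_and, not_false_eq_true,
    true_and]
  constructor
  · rintro ⟨h₁, h₂⟩
    exact ⟨by linear_combination -h₁, by linear_combination (u * h₁ - h₂) / 3⟩
  · rintro ⟨rfl, hu⟩
    exact ⟨by ring, by linear_combination -3 * hu⟩

theorem quarticEigenpairEquiv_x3y_of_fst_eq_zero (h : IsQuarticEigenpair 0 1 0 0 0 lam 0 y) :
    QuarticEigenpairEquiv lam 0 y 0 0 1 := by
  have hy : y ≠ 0 := fun hy ↦ h.1 (by simp [hy])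
  have hlam : lam = 0 := (isQuarticEigenpair_x3y_lam_eq_zero_iff h).mpr rfl
  simpa [hlam] using QuarticEigenpairEquiv.of_snd_ne_zero (lam := lam) (x := 0) hy

theorem quarticEigenpairEquiv_x3y_of_fst_ne_zero {s : ℂ} (hs : s ^ 2 = 3)
    (h : IsQuarticEigenpair 0 1 0 0 0 lam x y) (hx : x ≠ 0) :
    QuarticEigenpairEquiv lam x y s 1 (s / 3) ∨
      QuarticEigenpairEquiv lam x y (-s) 1 (-(s / 3)) := by
  have hequiv := QuarticEigenpairEquiv.of_fst_ne_zero (lam := lam) (y := y) hx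
  obtain ⟨hlam, hu⟩ := isQuarticEigenpair_x3y_one_iff.mp (h.of_equiv hequiv)
  rw [hlam] at hequiv
  rcases mul_eq_zero.mp (by linear_combination hu - hs / 9 :
      (y / x - s / 3) * (y / x + s / 3) = 0) with hu' | hu'
  · left
    convert hequiv using 1
    · linear_combination -3 * hu'
    · linear_combination -hu'
  · right
    convert hequiv using 1
    · linear_combination -3 * hu'
    · linear_combination -hu'

end FourXCubeY

/-- The tensor of `f(x,y) = 4x³y` (quartic coefficients `(0,1,0,0,0)`) has exactly three
eigenpair classes, represented by `(0,(0,1))`, `(√3,(1,√3/3))` and `(−√3,(1,−√3/3))`;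
exactly one class has eigenvalue zero. -/
theorem stmt16 :
    IsQuarticEigenpair 0 1 0 0 0 0 0 1 ∧
    IsQuarticEigenpair 0 1 0 0 0 (Real.sqrt 3 : ℂ) 1 ((Real.sqrt 3 : ℂ) / 3) ∧
    IsQuarticEigenpair 0 1 0 0 0 (-(Real.sqrt 3 : ℂ)) 1 (-((Real.sqrt 3 : ℂ) / 3)) ∧
    ¬ QuarticEigenpairEquiv 0 0 1 (Real.sqrt 3 : ℂ) 1 ((Real.sqrt 3 : ℂ) / 3) ∧
    ¬ QuarticEigenpairEquiv 0 0 1 (-(Real.sqrt 3 : ℂ)) 1 (-((Real.sqrt 3 : ℂ) / 3)) ∧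
    ¬ QuarticEigenpairEquiv (Real.sqrt 3 : ℂ) 1 ((Real.sqrt 3 : ℂ) / 3)
        (-(Real.sqrt 3 : ℂ)) 1 (-((Real.sqrt 3 : ℂ) / 3)) ∧
    (∀ lam x y : ℂ, IsQuarticEigenpair 0 1 0 0 0 lam x y →
      QuarticEigenpairEquiv lam x y 0 0 1 ∨
        QuarticEigenpairEquiv lam x y (Real.sqrt 3 : ℂ) 1 ((Real.sqrt 3 : ℂ) / 3) ∨
        QuarticEigenpairEquiv lam x y (-(Real.sqrt 3 : ℂ)) 1 (-((Real.sqrt 3 : ℂ) / 3))) ∧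
    (∀ lam x y : ℂ, IsQuarticEigenpair 0 1 0 0 0 lam x y →
      (lam = 0 ↔ QuarticEigenpairEquiv lam x y 0 0 1)) := by
  have hs : (Real.sqrt 3 : ℂ) ^ 2 = 3 := by
    exact_mod_cast Real.sq_sqrt (by norm_num : (0 : ℝ) ≤ 3)
  set s : ℂ := (Real.sqrt 3 : ℂ)
  have hs0 : s ≠ 0 := fun h ↦ by norm_num [h] at hs
  have eigen_pos : IsQuarticEigenpair 0 1 0 0 0 s 1 (s / 3) :=
    isQuarticEigenpair_x3y_one_iff.mpr ⟨by ring, by linear_combination hs / 9⟩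
  have eigen_neg : IsQuarticEigenpair 0 1 0 0 0 (-s) 1 (-(s / 3)) :=
    isQuarticEigenpair_x3y_one_iff.mpr ⟨by ring, by linear_combination hs / 9⟩
  refine ⟨⟨by simp, by ring, by ring⟩, eigen_pos, eigen_neg,
    fun h ↦ one_ne_zero (h.fst_eq_zero_iff.mp rfl), fun h ↦ one_ne_zero (h.fst_eq_zero_iff.mp rfl),
    fun h ↦ hs0 (by linear_combination h.lam_eq_of_fst_eq_one / 2), fun lam x y h ↦ ?_,
    fun lam x y h ↦ ?_⟩
  · by_cases hx : x = 0
    · subst hx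
      exact Or.inl (quarticEigenpairEquiv_x3y_of_fst_eq_zero h)
    · exact Or.inr (quarticEigenpairEquiv_x3y_of_fst_ne_zero hs h hx)
  · rw [isQuarticEigenpair_x3y_lam_eq_zero_iff h]
    refine ⟨fun hx ↦ ?_, fun hequiv ↦ hequiv.fst_eq_zero_iff.mpr rfl⟩
    subst hx
    exact quarticEigenpairEquiv_x3y_of_fst_eq_zero h
end

section
/- Every nonzero binary quartic form over ℂ is GL₂(ℂ)-equivalent to at least one of the following canonical forms: x⁴; x⁴ + 6μx²y² + y⁴ for some μ ∈ ℂ with μ ≠ ±1/3; 6x²y² + y⁴; 6x²y²; 4x³y. Moreover, any two canonical forms taken from distinct items of this list are not GL₂(ℂ)-equivalent. -/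
/-!
After a shear making the `x⁴`-coefficient nonzero, a nonzero quartic form over `ℂ` splits as
`a (x - r₁ y) (x - r₂ y) (x - r₃ y) (x - r₄ y)`, and the coincidences among the `rᵢ` decide the
canonical form: up to three roots can be moved anywhere by a change of variables. For four distinct
roots, sending `r₁, r₂` to `∞, 0` gives `u v (u - s v) (u - t v)`; the substitution
`u = w (x + y)`, `v = x - y` with `w² = s t` kills the odd part, leaving `(x² - y²) (A x² + B y²)`,
which a rescaling of `y` turns into `x⁴ + 6 μ x² y² + y⁴`.

The number of pairwise non-proportional zeros (points of `ℙ¹`) is invariant under equivalence; it is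
`1, 4, 3, 2, 2` for the five items. The two forms with two zeros, `6 x² y²` and `4 x³ y`, are
separated because a form equivalent to `x² y²` that vanishes at `(1, 0)` and `(0, 1)` is a multiple
of `x² y²`.
-/

/-- Two binary forms over ℂ (as functions) are GL₂(ℂ)-equivalent if one is obtained from
the other by an invertible linear change of variables. -/
def QuarticGL2EquivC (f g : ℂ → ℂ → ℂ) : Prop :=
  ∃ p11 p12 p21 p22 : ℂ, p11 * p22 - p12 * p21 ≠ 0 ∧
    ∀ u v : ℂ, g u v = f (p11 * u + p12 * v) (p21 * u + p22 * v)

open Polynomial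

def IsHomogeneousQuartic (f : ℂ → ℂ → ℂ) : Prop :=
  ∀ k x y : ℂ, f (k * x) (k * y) = k ^ 4 * f x y

namespace QuarticGL2EquivC

variable {f g h : ℂ → ℂ → ℂ}

theorem trans (hfg : QuarticGL2EquivC f g) (hgh : QuarticGL2EquivC g h) :
    QuarticGL2EquivC f h := by
  obtain ⟨p₁₁, p₁₂, p₂₁, p₂₂, hp, hfg⟩ := hfg
  obtain ⟨q₁₁, q₁₂, q₂₁, q₂₂, hq, hgh⟩ := hgh
  refine ⟨p₁₁ * q₁₁ + p₁₂ * q₂₁, p₁₁ * q₁₂ + p₁₂ * q₂₂, p₂₁ * q₁₁ + p₂₂ * q₂₁,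
    p₂₁ * q₁₂ + p₂₂ * q₂₂, ?_, fun u v => ?_⟩
  · have hdet : (p₁₁ * q₁₁ + p₁₂ * q₂₁) * (p₂₁ * q₁₂ + p₂₂ * q₂₂)
        - (p₁₁ * q₁₂ + p₁₂ * q₂₂) * (p₂₁ * q₁₁ + p₂₂ * q₂₁)
        = (p₁₁ * p₂₂ - p₁₂ * p₂₁) * (q₁₁ * q₂₂ - q₁₂ * q₂₁) := by ring
    rw [hdet]
    exact mul_ne_zero hp hq
  · rw [hgh, hfg]
    congr 1 <;> ring

theorem symm (hfg : QuarticGL2EquivC f g) : QuarticGL2EquivC g f := by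
  obtain ⟨p₁₁, p₁₂, p₂₁, p₂₂, hp, hfg⟩ := hfg
  set D := p₁₁ * p₂₂ - p₁₂ * p₂₁ with hD
  refine ⟨p₂₂ / D, -p₁₂ / D, -p₂₁ / D, p₁₁ / D, ?_, fun u v => ?_⟩
  · have hdet : p₂₂ / D * (p₁₁ / D) - -p₁₂ / D * (-p₂₁ / D) = 1 / D := by
      field_simp
      rw [hD]
      ring
    rw [hdet]
    exact one_div_ne_zero hp
  · rw [hfg]
    congr 1 <;> field_simp <;> ring

theorem of_const_mul (hf : IsHomogeneousQuartic f) {c p₁₁ p₁₂ p₂₁ p₂₂ : ℂ} (hc : c ≠ 0)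
    (hp : p₁₁ * p₂₂ - p₁₂ * p₂₁ ≠ 0)
    (hfg : ∀ u v, c * g u v = f (p₁₁ * u + p₁₂ * v) (p₂₁ * u + p₂₂ * v)) :
    QuarticGL2EquivC f g := by
  obtain ⟨k, hk⟩ := IsAlgClosed.exists_pow_nat_eq c⁻¹ four_pos
  have hk₀ : k ≠ 0 := by
    rintro rfl
    exact inv_ne_zero hc (by simpa using hk.symm)
  refine ⟨k * p₁₁, k * p₁₂, k * p₂₁, k * p₂₂, ?_, fun u v => ?_⟩
  · have hdet : k * p₁₁ * (k * p₂₂) - k * p₁₂ * (k * p₂₁)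
        = k ^ 2 * (p₁₁ * p₂₂ - p₁₂ * p₂₁) := by ring
    rw [hdet]
    exact mul_ne_zero (pow_ne_zero 2 hk₀) hp
  · calc g u v = k ^ 4 * (c * g u v) := by rw [hk, inv_mul_cancel_left₀ hc]
      _ = _ := by rw [hfg, ← hf]; congr 1 <;> ring

end QuarticGL2EquivC

def binaryQuartic (a b c d e : ℂ) : ℂ → ℂ → ℂ :=
  fun x y => a * x ^ 4 + b * x ^ 3 * y + c * x ^ 2 * y ^ 2 + d * x * y ^ 3 + e * y ^ 4

def quarticOfRoots (a r₁ r₂ r₃ r₄ : ℂ) : ℂ → ℂ → ℂ :=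
  fun x y => a * (x - r₁ * y) * (x - r₂ * y) * (x - r₃ * y) * (x - r₄ * y)

theorem isHomogeneousQuartic_quarticOfRoots (a r₁ r₂ r₃ r₄ : ℂ) :
    IsHomogeneousQuartic (quarticOfRoots a r₁ r₂ r₃ r₄) := by
  intro k x y
  simp only [quarticOfRoots]
  ring

theorem exists_binaryQuartic_one_eq_quarticOfRoots (b c d e : ℂ) :
    ∃ r₁ r₂ r₃ r₄, binaryQuartic 1 b c d e = quarticOfRoots 1 r₁ r₂ r₃ r₄ := by
  have root : ∀ {p : ℂ[X]} {n : ℕ}, p.degree = n → n ≠ 0 → ∃ z, p.eval z = 0 :=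
    fun hp hn => IsAlgClosed.exists_root _ (by rw [hp]; exact_mod_cast hn)
  obtain ⟨r₁, h₁⟩ := root (p := X ^ 4 + C b * X ^ 3 + C c * X ^ 2 + C d * X + C e)
    (by compute_degree!) four_ne_zero
  obtain ⟨r₂, h₂⟩ := root (p := X ^ 3 + C (b + r₁) * X ^ 2 + C (c + b * r₁ + r₁ ^ 2) * X
    + C (d + c * r₁ + b * r₁ ^ 2 + r₁ ^ 3)) (by compute_degree!) three_ne_zero
  obtain ⟨r₃, h₃⟩ := root (p := X ^ 2 + C (b + r₁ + r₂) * X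
    + C (c + b * r₁ + r₁ ^ 2 + (b + r₁) * r₂ + r₂ ^ 2)) (by compute_degree!) two_ne_zero
  simp only [eval_add, eval_mul, eval_pow, eval_C, eval_X] at h₁ h₂ h₃
  refine ⟨r₁, r₂, r₃, -(b + r₁ + r₂ + r₃), funext₂ fun x y => ?_⟩
  simp only [binaryQuartic, quarticOfRoots]
  -- the homogenised synthetic divisions by `x - r₁ y`, `x - r₂ y`, `x - r₃ y`
  linear_combination y ^ 4 * h₁ + (x - r₁ * y) * y ^ 3 * h₂
    + (x - r₁ * y) * (x - r₂ * y) * y ^ 2 * h₃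

theorem exists_binaryQuartic_eq_quarticOfRoots {a : ℂ} (ha : a ≠ 0) (b c d e : ℂ) :
    ∃ r₁ r₂ r₃ r₄, binaryQuartic a b c d e = quarticOfRoots a r₁ r₂ r₃ r₄ := by
  obtain ⟨r₁, r₂, r₃, r₄, h⟩ :=
    exists_binaryQuartic_one_eq_quarticOfRoots (b / a) (c / a) (d / a) (e / a)
  refine ⟨r₁, r₂, r₃, r₄, funext₂ fun x y => ?_⟩
  have hxy := congrFun₂ h x y
  simp only [binaryQuartic, quarticOfRoots] at hxy ⊢
  field_simp at hxy
  linear_combination hxy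

theorem exists_binaryQuartic_one_ne_zero {a b c d e : ℂ}
    (h : ¬(a = 0 ∧ b = 0 ∧ c = 0 ∧ d = 0 ∧ e = 0)) : ∃ t, binaryQuartic a b c d e 1 t ≠ 0 := by
  by_contra! hzero
  simp only [binaryQuartic] at hzero
  have h₀ := hzero 0
  have h₁ := hzero 1
  have hm₁ := hzero (-1)
  have h₂ := hzero 2
  have hm₂ := hzero (-2)
  -- Lagrange interpolation at the nodes `0, ±1, ±2`
  exact h ⟨by linear_combination h₀,
    by linear_combination (2 / 3) * h₁ - (2 / 3) * hm₁ - (1 / 12) * h₂ + (1 / 12) * hm₂,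
    by linear_combination (-5 / 4) * h₀ + (2 / 3) * h₁ + (2 / 3) * hm₁ - (1 / 24) * h₂
      - (1 / 24) * hm₂,
    by linear_combination (-1 / 6) * h₁ + (1 / 6) * hm₁ + (1 / 12) * h₂ - (1 / 12) * hm₂,
    by linear_combination (1 / 4) * h₀ - (1 / 6) * h₁ - (1 / 6) * hm₁ + (1 / 24) * h₂
      + (1 / 24) * hm₂⟩

theorem binaryQuartic_shear (a b c d e t u v : ℂ) :
    binaryQuartic a b c d e u (t * u + v) =
      binaryQuartic (binaryQuartic a b c d e 1 t) (b + 2 * c * t + 3 * d * t ^ 2 + 4 * e * t ^ 3)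
        (c + 3 * d * t + 6 * e * t ^ 2) (d + 4 * e * t) e u v := by
  simp only [binaryQuartic]
  ring

theorem exists_equiv_quarticOfRoots {a b c d e : ℂ}
    (h : ¬(a = 0 ∧ b = 0 ∧ c = 0 ∧ d = 0 ∧ e = 0)) :
    ∃ a' r₁ r₂ r₃ r₄, a' ≠ 0 ∧
      QuarticGL2EquivC (binaryQuartic a b c d e) (quarticOfRoots a' r₁ r₂ r₃ r₄) := by
  obtain ⟨t, ht⟩ := exists_binaryQuartic_one_ne_zero h
  obtain ⟨r₁, r₂, r₃, r₄, hroots⟩ := exists_binaryQuartic_eq_quarticOfRoots ht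
    (b + 2 * c * t + 3 * d * t ^ 2 + 4 * e * t ^ 3) (c + 3 * d * t + 6 * e * t ^ 2)
    (d + 4 * e * t) e
  refine ⟨_, r₁, r₂, r₃, r₄, ht, 1, 0, t, 1, by norm_num, fun u v => ?_⟩
  rw [← hroots, ← binaryQuartic_shear]
  congr 1 <;> ring

def HasCanonicalForm (f : ℂ → ℂ → ℂ) : Prop :=
  QuarticGL2EquivC f (fun x _y => x ^ 4) ∨
    (∃ μ : ℂ, μ ≠ 1 / 3 ∧ μ ≠ -(1 / 3) ∧
      QuarticGL2EquivC f (fun x y => x ^ 4 + 6 * μ * x ^ 2 * y ^ 2 + y ^ 4)) ∨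
    QuarticGL2EquivC f (fun x y => 6 * x ^ 2 * y ^ 2 + y ^ 4) ∨
    QuarticGL2EquivC f (fun x y => 6 * x ^ 2 * y ^ 2) ∨
    QuarticGL2EquivC f (fun x y => 4 * x ^ 3 * y)

theorem HasCanonicalForm.of_equiv {f g : ℂ → ℂ → ℂ} (hfg : QuarticGL2EquivC f g)
    (hg : HasCanonicalForm g) : HasCanonicalForm f := by
  rcases hg with h | ⟨μ, hμ₁, hμ₂, h⟩ | h | h | h
  · exact .inl (hfg.trans h)
  · exact .inr (.inl ⟨μ, hμ₁, hμ₂, hfg.trans h⟩)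
  · exact .inr (.inr (.inl (hfg.trans h)))
  · exact .inr (.inr (.inr (.inl (hfg.trans h))))
  · exact .inr (.inr (.inr (.inr (hfg.trans h))))

theorem equiv_sq_sub_sq_mul_of_sq_eq_mul {s t w : ℂ} (hw : w ^ 2 = s * t) (hw₀ : w ≠ 0) :
    QuarticGL2EquivC (fun u v => u * v * (u - s * v) * (u - t * v))
      (fun x y => (x ^ 2 - y ^ 2) * ((2 * w - s - t) * x ^ 2 + (2 * w + s + t) * y ^ 2)) := by
  refine .of_const_mul (fun k x y => by ring) (c := w ^ 2) (p₁₁ := w) (p₁₂ := w) (p₂₁ := 1)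
    (p₂₂ := -1) (pow_ne_zero 2 hw₀) (by ring_nf; simpa using hw₀) fun x y => ?_
  linear_combination w * (x ^ 2 - y ^ 2) * (x - y) ^ 2 * hw

theorem exists_sq_sub_sq_mul_equiv_biquadratic {A B : ℂ} (hA : A ≠ 0) (hB : B ≠ 0)
    (hAB : A + B ≠ 0) :
    ∃ μ : ℂ, μ ≠ 1 / 3 ∧ μ ≠ -(1 / 3) ∧
      QuarticGL2EquivC (fun x y => (x ^ 2 - y ^ 2) * (A * x ^ 2 + B * y ^ 2))
        (fun x y => x ^ 4 + 6 * μ * x ^ 2 * y ^ 2 + y ^ 4) := by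
  obtain ⟨l, hl⟩ := IsAlgClosed.exists_pow_nat_eq (-A / B) four_pos
  have hl' : B * l ^ 4 = -A := by rw [hl]; field_simp
  have hl₀ : l ≠ 0 := by rintro rfl; exact hA (by linear_combination hl')
  obtain ⟨μ, hμ⟩ : ∃ μ, 6 * μ * A = (B - A) * l ^ 2 :=
    ⟨(B - A) * l ^ 2 / (6 * A), by field_simp⟩
  have hμsq : 36 * μ ^ 2 ≠ 4 := by
    intro h
    have : A * (A + B) ^ 2 = 0 := by
      linear_combination (-(A ^ 2 * B)) * h + B * (6 * μ * A + (B - A) * l ^ 2) * hμ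
        + (B - A) ^ 2 * hl'
    simp [hA, hAB] at this
  refine ⟨μ, fun h => hμsq (by rw [h]; norm_num), fun h => hμsq (by rw [h]; norm_num),
    .of_const_mul (fun k x y => by ring) hA (p₁₁ := 1) (p₁₂ := 0) (p₂₁ := 0) (p₂₂ := l)
      (by simpa using hl₀) fun x y => ?_⟩
  linear_combination x ^ 2 * y ^ 2 * hμ + y ^ 4 * hl'

section quarticOfRoots

variable {a : ℂ}

theorem quarticOfRoots_equiv_pow_four (ha : a ≠ 0) (r : ℂ) :
    QuarticGL2EquivC (quarticOfRoots a r r r r) (fun x _y => x ^ 4) :=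
  .of_const_mul (isHomogeneousQuartic_quarticOfRoots _ _ _ _ _) ha (p₁₁ := 1) (p₁₂ := r)
    (p₂₁ := 0) (p₂₂ := 1) (by norm_num) fun u v => by simp only [quarticOfRoots]; ring

theorem quarticOfRoots_equiv_pow_three_mul (ha : a ≠ 0) {r t : ℂ} (hrt : r ≠ t) :
    QuarticGL2EquivC (quarticOfRoots a r r r t) (fun x y => 4 * x ^ 3 * y) := by
  have hrt' : t - r ≠ 0 := sub_ne_zero.mpr hrt.symm
  refine .of_const_mul (isHomogeneousQuartic_quarticOfRoots _ _ _ _ _)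
    (c := -(a * (t - r) ^ 4) / 4) (p₁₁ := t) (p₁₂ := r) (p₂₁ := 1) (p₂₂ := 1)
    (by simp [ha, hrt']) (by simpa using hrt') fun u v => ?_
  simp only [quarticOfRoots]
  ring

theorem quarticOfRoots_equiv_sq_mul_sq (ha : a ≠ 0) {r t : ℂ} (hrt : r ≠ t) :
    QuarticGL2EquivC (quarticOfRoots a r r t t) (fun x y => 6 * x ^ 2 * y ^ 2) := by
  have hrt' : t - r ≠ 0 := sub_ne_zero.mpr hrt.symm
  refine .of_const_mul (isHomogeneousQuartic_quarticOfRoots _ _ _ _ _)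
    (c := a * (t - r) ^ 4 / 6) (p₁₁ := t) (p₁₂ := r) (p₂₁ := 1) (p₂₂ := 1)
    (by simp [ha, hrt']) (by simpa using hrt') fun u v => ?_
  simp only [quarticOfRoots]
  ring

theorem quarticOfRoots_equiv_sq_mul_sq_add_pow_four (ha : a ≠ 0) {r s t : ℂ}
    (hrs : r ≠ s) (hrt : r ≠ t) (hst : s ≠ t) :
    QuarticGL2EquivC (quarticOfRoots a r r s t) (fun x y => 6 * x ^ 2 * y ^ 2 + y ^ 4) := by
  obtain ⟨γ, hγ⟩ := IsAlgClosed.exists_pow_nat_eq (-6 : ℂ) two_pos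
  have hγ₀ : γ ≠ 0 := by rintro rfl; norm_num at hγ
  have hrs' := sub_ne_zero.mpr hrs
  have hsr' := sub_ne_zero.mpr hrs.symm
  have hrt' := sub_ne_zero.mpr hrt
  have hts' := sub_ne_zero.mpr hst.symm
  -- `x - r y`, `x - s y`, `x - t y` pull back to multiples of `y`, `y - γ x`, `y + γ x`,
  -- and `y² (y - γ x) (y + γ x) = 6 x² y² + y⁴`
  refine .of_const_mul (isHomogeneousQuartic_quarticOfRoots _ _ _ _ _)
    (c := a * (2 * (r - s) * (r - t)) ^ 2 * ((s - r) * (t - s)) * ((r - t) * (t - s)))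
    (p₁₁ := r * γ * (t - s)) (p₁₂ := (s - r) * (t - s) - s * (2 * r - s - t))
    (p₂₁ := γ * (t - s)) (p₂₂ := -(2 * r - s - t)) (by simp [*]) ?_ fun u v => ?_
  · have hdet : r * γ * (t - s) * -(2 * r - s - t) - ((s - r) * (t - s) - s * (2 * r - s - t))
        * (γ * (t - s)) = -2 * γ * (t - s) * (r - s) * (r - t) := by ring
    rw [hdet]
    exact mul_ne_zero (mul_ne_zero (mul_ne_zero (mul_ne_zero (by norm_num) hγ₀) hts') hrs') hrt'
  · simp only [quarticOfRoots]
    linear_combination a * (2 * (r - s) * (r - t)) ^ 2 * ((s - r) * (t - s)) * ((r - t) * (t - s))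
      * u ^ 2 * v ^ 2 * hγ

theorem exists_quarticOfRoots_equiv_mul_mul_sub_mul_sub (ha : a ≠ 0) {r₁ r₂ r₃ r₄ : ℂ}
    (h₁₂ : r₁ ≠ r₂) (h₁₃ : r₁ ≠ r₃) (h₁₄ : r₁ ≠ r₄) (h₂₃ : r₂ ≠ r₃) (h₂₄ : r₂ ≠ r₄)
    (h₃₄ : r₃ ≠ r₄) :
    ∃ s t : ℂ, s ≠ 0 ∧ t ≠ 0 ∧ s ≠ t ∧ QuarticGL2EquivC (quarticOfRoots a r₁ r₂ r₃ r₄)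
      (fun u v => u * v * (u - s * v) * (u - t * v)) := by
  have h₁₂' := sub_ne_zero.mpr h₁₂
  have h₁₃' := sub_ne_zero.mpr h₁₃
  have h₁₄' := sub_ne_zero.mpr h₁₄
  have h₃₂' := sub_ne_zero.mpr h₂₃.symm
  have h₄₂' := sub_ne_zero.mpr h₂₄.symm
  have h₄₃' := sub_ne_zero.mpr h₃₄.symm
  refine ⟨(r₁ - r₃) / (r₃ - r₂), (r₁ - r₄) / (r₄ - r₂), by simp [*], by simp [*], ?_, ?_⟩
  · rw [Ne, div_eq_div_iff h₃₂' h₄₂']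
    intro h
    exact mul_ne_zero h₁₂' h₄₃' (by linear_combination h)
  · -- sends `r₁ ↦ ∞` and `r₂ ↦ 0`
    refine .of_const_mul (isHomogeneousQuartic_quarticOfRoots _ _ _ _ _)
      (c := -(a * (r₁ - r₂) ^ 2 * (r₂ - r₃) * (r₂ - r₄))) (p₁₁ := r₂) (p₁₂ := r₁) (p₂₁ := 1)
      (p₂₂ := 1) (by simp [*, sub_ne_zero.mpr h₂₃, sub_ne_zero.mpr h₂₄])
      (by simpa using sub_ne_zero.mpr h₁₂.symm) fun u v => ?_
    simp only [quarticOfRoots]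
    field_simp
    ring

theorem hasCanonicalForm_quarticOfRoots_of_pairwise_ne (ha : a ≠ 0) {r₁ r₂ r₃ r₄ : ℂ}
    (h₁₂ : r₁ ≠ r₂) (h₁₃ : r₁ ≠ r₃) (h₁₄ : r₁ ≠ r₄) (h₂₃ : r₂ ≠ r₃) (h₂₄ : r₂ ≠ r₄)
    (h₃₄ : r₃ ≠ r₄) : HasCanonicalForm (quarticOfRoots a r₁ r₂ r₃ r₄) := by
  obtain ⟨s, t, hs, ht, hst, hequiv⟩ :=
    exists_quarticOfRoots_equiv_mul_mul_sub_mul_sub ha h₁₂ h₁₃ h₁₄ h₂₃ h₂₄ h₃₄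
  obtain ⟨w, hw⟩ := IsAlgClosed.exists_pow_nat_eq (s * t) two_pos
  have hw₀ : w ≠ 0 := by rintro rfl; simp [hs, ht] at hw
  have hAB : (2 * w - s - t) * (2 * w + s + t) = -(s - t) ^ 2 := by linear_combination 4 * hw
  have hAB₀ : (2 * w - s - t) * (2 * w + s + t) ≠ 0 := by
    rw [hAB]
    exact neg_ne_zero.mpr (pow_ne_zero 2 (sub_ne_zero.mpr hst))
  obtain ⟨μ, hμ₁, hμ₂, hμ⟩ := exists_sq_sub_sq_mul_equiv_biquadratic
    (left_ne_zero_of_mul hAB₀) (right_ne_zero_of_mul hAB₀) (by ring_nf; simpa using hw₀)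
  exact .inr (.inl ⟨μ, hμ₁, hμ₂,
    hequiv.trans ((equiv_sq_sub_sq_mul_of_sq_eq_mul hw hw₀).trans hμ)⟩)

theorem hasCanonicalForm_quarticOfRoots_of_double (ha : a ≠ 0) (r s t : ℂ) :
    HasCanonicalForm (quarticOfRoots a r r s t) := by
  by_cases hrs : r = s
  · subst hrs
    by_cases hrt : r = t
    · subst hrt
      exact .inl (quarticOfRoots_equiv_pow_four ha r)
    · exact .inr (.inr (.inr (.inr (quarticOfRoots_equiv_pow_three_mul ha hrt))))
  by_cases hrt : r = t
  · subst hrt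
    have hperm : quarticOfRoots a r r s r = quarticOfRoots a r r r s := by
      funext x y; simp only [quarticOfRoots]; ring
    rw [hperm]
    exact .inr (.inr (.inr (.inr (quarticOfRoots_equiv_pow_three_mul ha hrs))))
  by_cases hst : s = t
  · subst hst
    exact .inr (.inr (.inr (.inl (quarticOfRoots_equiv_sq_mul_sq ha hrs))))
  exact .inr (.inr (.inl (quarticOfRoots_equiv_sq_mul_sq_add_pow_four ha hrs hrt hst)))

theorem hasCanonicalForm_quarticOfRoots (ha : a ≠ 0) (r₁ r₂ r₃ r₄ : ℂ) :
    HasCanonicalForm (quarticOfRoots a r₁ r₂ r₃ r₄) := by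
  have double (r s t : ℂ) (h : quarticOfRoots a r₁ r₂ r₃ r₄ = quarticOfRoots a r r s t) :
      HasCanonicalForm (quarticOfRoots a r₁ r₂ r₃ r₄) :=
    h ▸ hasCanonicalForm_quarticOfRoots_of_double ha r s t
  by_cases h₁₂ : r₁ = r₂
  · exact double r₁ r₃ r₄ (by rw [h₁₂])
  by_cases h₁₃ : r₁ = r₃
  · exact double r₁ r₂ r₄ (by funext x y; simp only [quarticOfRoots, ← h₁₃]; ring)
  by_cases h₁₄ : r₁ = r₄
  · exact double r₁ r₂ r₃ (by funext x y; simp only [quarticOfRoots, ← h₁₄]; ring)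
  by_cases h₂₃ : r₂ = r₃
  · exact double r₂ r₁ r₄ (by funext x y; simp only [quarticOfRoots, ← h₂₃]; ring)
  by_cases h₂₄ : r₂ = r₄
  · exact double r₂ r₁ r₃ (by funext x y; simp only [quarticOfRoots, ← h₂₄]; ring)
  by_cases h₃₄ : r₃ = r₄
  · exact double r₃ r₁ r₂ (by funext x y; simp only [quarticOfRoots, ← h₃₄]; ring)
  exact hasCanonicalForm_quarticOfRoots_of_pairwise_ne ha h₁₂ h₁₃ h₁₄ h₂₃ h₂₄ h₃₄

end quarticOfRoots

theorem hasCanonicalForm_binaryQuartic {a b c d e : ℂ}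
    (h : ¬(a = 0 ∧ b = 0 ∧ c = 0 ∧ d = 0 ∧ e = 0)) :
    HasCanonicalForm (binaryQuartic a b c d e) := by
  obtain ⟨a', r₁, r₂, r₃, r₄, ha', hequiv⟩ := exists_equiv_quarticOfRoots h
  exact (hasCanonicalForm_quarticOfRoots ha' r₁ r₂ r₃ r₄).of_equiv hequiv

/-- `f` has at least `n` distinct zeros in `ℙ¹`. -/
def HasIndepZeros (f : ℂ → ℂ → ℂ) (n : ℕ) : Prop :=
  ∃ z : Fin n → ℂ × ℂ, (∀ i, f (z i).1 (z i).2 = 0) ∧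
    Pairwise fun i j => (z i).1 * (z j).2 - (z j).1 * (z i).2 ≠ 0

theorem HasIndepZeros.mono {f : ℂ → ℂ → ℂ} {m n : ℕ} (hf : HasIndepZeros f n) (hmn : m ≤ n) :
    HasIndepZeros f m := by
  obtain ⟨z, hz, hind⟩ := hf
  exact ⟨z ∘ Fin.castLE hmn, fun i => hz _,
    fun i j hij => hind ((Fin.castLE_injective hmn).ne hij)⟩

theorem QuarticGL2EquivC.hasIndepZeros {f g : ℂ → ℂ → ℂ} (hfg : QuarticGL2EquivC f g) {n : ℕ}
    (hg : HasIndepZeros g n) : HasIndepZeros f n := by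
  obtain ⟨p₁₁, p₁₂, p₂₁, p₂₂, hp, hfg⟩ := hfg
  obtain ⟨z, hz, hind⟩ := hg
  refine ⟨fun i => (p₁₁ * (z i).1 + p₁₂ * (z i).2, p₂₁ * (z i).1 + p₂₂ * (z i).2),
    fun i => hfg _ _ ▸ hz i, fun i j hij => ?_⟩
  have hdet : (p₁₁ * (z i).1 + p₁₂ * (z i).2) * (p₂₁ * (z j).1 + p₂₂ * (z j).2)
      - (p₁₁ * (z j).1 + p₁₂ * (z j).2) * (p₂₁ * (z i).1 + p₂₂ * (z i).2)
      = (p₁₁ * p₂₂ - p₁₂ * p₂₁) * ((z i).1 * (z j).2 - (z j).1 * (z i).2) := by ring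
  simpa only [hdet] using mul_ne_zero hp (hind hij)

theorem not_quarticGL2EquivC_of_hasIndepZeros_right {f g : ℂ → ℂ → ℂ} {n : ℕ}
    (hf : ¬ HasIndepZeros f n) (hg : HasIndepZeros g n) : ¬ QuarticGL2EquivC f g :=
  fun hfg => hf (hfg.hasIndepZeros hg)

theorem not_quarticGL2EquivC_of_hasIndepZeros_left {f g : ℂ → ℂ → ℂ} {n : ℕ}
    (hf : HasIndepZeros f n) (hg : ¬ HasIndepZeros g n) : ¬ QuarticGL2EquivC f g :=
  fun hfg => hg (hfg.symm.hasIndepZeros hf)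

theorem cross_eq_zero_of_mem_line {K : Type*} [Field K] {p q u₁ v₁ u₂ v₂ : K}
    (hpq : (p, q) ≠ 0) (h₁ : p * u₁ + q * v₁ = 0) (h₂ : p * u₂ + q * v₂ = 0) :
    u₁ * v₂ - u₂ * v₁ = 0 := by
  by_cases hp : p = 0
  · have hq : q ≠ 0 := fun hq => hpq (by simp [hp, hq])
    exact (mul_eq_zero.mp (by linear_combination u₁ * h₂ - u₂ * h₁ :
      q * (u₁ * v₂ - u₂ * v₁) = 0)).resolve_left hq
  · exact (mul_eq_zero.mp (by linear_combination v₂ * h₁ - v₁ * h₂ :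
      p * (u₁ * v₂ - u₂ * v₁) = 0)).resolve_left hp

theorem not_hasIndepZeros_of_forall_mem_lines {f : ℂ → ℂ → ℂ} {k : ℕ} (L : Fin k → ℂ × ℂ)
    (hL : ∀ i, L i ≠ 0) (hf : ∀ u v, f u v = 0 → ∃ i, (L i).1 * u + (L i).2 * v = 0) :
    ¬ HasIndepZeros f (k + 1) := by
  rintro ⟨z, hz, hind⟩
  choose line hline using fun j => hf _ _ (hz j)
  obtain ⟨j₁, j₂, hne, hsame⟩ := Fintype.exists_ne_map_eq_of_card_lt line (by simp)
  exact hind hne (cross_eq_zero_of_mem_line (hL (line j₁)) (hline j₁) (hsame ▸ hline j₂))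

theorem hasIndepZeros_two_of_eq_zero {f : ℂ → ℂ → ℂ} (h₁₀ : f 1 0 = 0) (h₀₁ : f 0 1 = 0) :
    HasIndepZeros f 2 :=
  ⟨![(1, 0), (0, 1)], by simp [Fin.forall_fin_two, h₁₀, h₀₁], by
    intro i j hij; fin_cases i <;> fin_cases j <;> simp at hij ⊢⟩

theorem not_hasIndepZeros_two_pow_four : ¬ HasIndepZeros (fun x _y => x ^ 4) 2 :=
  not_hasIndepZeros_of_forall_mem_lines ![(1, 0)] (by simp) fun u v h => ⟨0, by simpa using h⟩

theorem not_hasIndepZeros_three_sq_mul_sq : ¬ HasIndepZeros (fun x y => 6 * x ^ 2 * y ^ 2) 3 :=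
  not_hasIndepZeros_of_forall_mem_lines ![(1, 0), (0, 1)] (by simp [Fin.forall_fin_two])
    fun u v h => by simpa [Fin.exists_fin_two] using h

theorem not_hasIndepZeros_three_pow_three_mul : ¬ HasIndepZeros (fun x y => 4 * x ^ 3 * y) 3 :=
  not_hasIndepZeros_of_forall_mem_lines ![(1, 0), (0, 1)] (by simp [Fin.forall_fin_two])
    fun u v h => by simpa [Fin.exists_fin_two] using h

theorem not_hasIndepZeros_four_sq_mul_sq_add_pow_four :
    ¬ HasIndepZeros (fun x y => 6 * x ^ 2 * y ^ 2 + y ^ 4) 4 := by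
  obtain ⟨γ, hγ⟩ := IsAlgClosed.exists_pow_nat_eq (-6 : ℂ) two_pos
  refine not_hasIndepZeros_of_forall_mem_lines ![(0, 1), (-γ, 1), (γ, 1)]
    (by simp [Fin.forall_fin_succ]) fun u v h => ?_
  have hfac : v ^ 2 * ((-γ * u + v) * (γ * u + v)) = 0 := by
    linear_combination h - u ^ 2 * v ^ 2 * hγ
  rcases mul_eq_zero.mp hfac with hv | hv
  · exact ⟨0, by simpa using hv⟩
  rcases mul_eq_zero.mp hv with hv | hv
  · exact ⟨1, by simpa using hv⟩
  · exact ⟨2, by simpa using hv⟩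

theorem hasIndepZeros_three_sq_mul_sq_add_pow_four :
    HasIndepZeros (fun x y => 6 * x ^ 2 * y ^ 2 + y ^ 4) 3 := by
  obtain ⟨δ, hδ⟩ := IsAlgClosed.exists_pow_nat_eq (-1 / 6 : ℂ) two_pos
  have hδ₀ : δ ≠ 0 := by rintro rfl; norm_num at hδ
  have hδ' : 6 * δ ^ 2 + 1 = 0 := by linear_combination 6 * hδ
  refine ⟨![(1, 0), (δ, 1), (-δ, 1)], fun i => ?_, fun i j hij => ?_⟩
  · fin_cases i <;> simp [hδ']
  · fin_cases i <;> fin_cases j <;>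
      simp only [Fin.zero_eta, Fin.mk_one, Fin.reduceFinMk, Fin.isValue, Matrix.cons_val_zero,
        Matrix.cons_val_one, Matrix.cons_val] at hij ⊢ <;> grind

theorem exists_roots_biquadratic {μ : ℂ} (hμ₁ : μ ≠ 1 / 3) (hμ₂ : μ ≠ -(1 / 3)) :
    ∃ α β : ℂ, α ^ 4 + 6 * μ * α ^ 2 + 1 = 0 ∧ β ^ 4 + 6 * μ * β ^ 2 + 1 = 0 ∧
      α ≠ 0 ∧ β ≠ 0 ∧ α ^ 2 ≠ β ^ 2 := by
  obtain ⟨s, hs⟩ := IsAlgClosed.exists_pow_nat_eq (9 * μ ^ 2 - 1) two_pos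
  obtain ⟨α, hα⟩ := IsAlgClosed.exists_pow_nat_eq (-3 * μ + s) two_pos
  obtain ⟨β, hβ⟩ := IsAlgClosed.exists_pow_nat_eq (-3 * μ - s) two_pos
  have hαβ : α ^ 2 * β ^ 2 = 1 := by rw [hα, hβ]; linear_combination -hs
  refine ⟨α, β, by linear_combination (α ^ 2 + 3 * μ + s) * hα + hs,
    by linear_combination (β ^ 2 + 3 * μ - s) * hβ + hs, fun h => by simp [h] at hαβ,
    fun h => by simp [h] at hαβ, fun h => ?_⟩
  have hs₀ : s = 0 := by linear_combination (hβ - hα + h) / 2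
  rw [hs₀] at hs
  rcases mul_eq_zero.mp (by linear_combination -hs : (3 * μ - 1) * (3 * μ + 1) = 0) with h | h
  · exact hμ₁ (by linear_combination h / 3)
  · exact hμ₂ (by linear_combination h / 3)

theorem hasIndepZeros_four_biquadratic {μ : ℂ} (hμ₁ : μ ≠ 1 / 3) (hμ₂ : μ ≠ -(1 / 3)) :
    HasIndepZeros (fun x y => x ^ 4 + 6 * μ * x ^ 2 * y ^ 2 + y ^ 4) 4 := by
  obtain ⟨α, β, hα, hβ, hα₀, hβ₀, hαβ⟩ := exists_roots_biquadratic hμ₁ hμ₂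
  refine ⟨![(α, 1), (-α, 1), (β, 1), (-β, 1)], fun i => ?_, fun i j hij => ?_⟩
  · fin_cases i <;> simp [hα, hβ, Even.neg_pow (by decide : Even 4)]
  · fin_cases i <;> fin_cases j <;>
      simp only [Fin.zero_eta, Fin.mk_one, Fin.reduceFinMk, Fin.isValue, Matrix.cons_val_zero,
        Matrix.cons_val_one, Matrix.cons_val] at hij ⊢ <;> grind

theorem QuarticGL2EquivC.eq_mul_sq_mul_sq {g : ℂ → ℂ → ℂ}
    (hg : QuarticGL2EquivC (fun x y => 6 * x ^ 2 * y ^ 2) g) (h₁₀ : g 1 0 = 0)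
    (h₀₁ : g 0 1 = 0) : ∃ K, ∀ u v, g u v = K * u ^ 2 * v ^ 2 := by
  obtain ⟨p₁₁, p₁₂, p₂₁, p₂₂, hp, hg⟩ := hg
  have e₁ : (p₁₁ * p₂₁) ^ 2 = 0 := by linear_combination (1 / 6) * ((hg 1 0).symm.trans h₁₀)
  have e₂ : (p₁₂ * p₂₂) ^ 2 = 0 := by linear_combination (1 / 6) * ((hg 0 1).symm.trans h₀₁)
  rcases mul_eq_zero.mp (pow_eq_zero_iff two_ne_zero |>.mp e₁) with h₁ | h₁ <;>
    rcases mul_eq_zero.mp (pow_eq_zero_iff two_ne_zero |>.mp e₂) with h₂ | h₂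
  · exact absurd (by rw [h₁, h₂]; ring) hp
  · exact ⟨6 * p₁₂ ^ 2 * p₂₁ ^ 2, fun u v => by rw [hg, h₁, h₂]; ring⟩
  · exact ⟨6 * p₁₁ ^ 2 * p₂₂ ^ 2, fun u v => by rw [hg, h₁, h₂]; ring⟩
  · exact absurd (by rw [h₁, h₂]; ring) hp

theorem not_quarticGL2EquivC_sq_mul_sq_pow_three_mul :
    ¬ QuarticGL2EquivC (fun x y => 6 * x ^ 2 * y ^ 2) (fun x y => 4 * x ^ 3 * y) := by
  intro h
  obtain ⟨K, hK⟩ := h.eq_mul_sq_mul_sq (by norm_num) (by norm_num)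
  have h₁ : (4 : ℂ) = K := by simpa using hK 1 1
  have h₂ : (-4 : ℂ) = K := by simpa using hK 1 (-1)
  norm_num [← h₁] at h₂

/-- Every nonzero binary quartic over ℂ is GL₂(ℂ)-equivalent to at least one of the
canonical forms `x⁴`; `x⁴ + 6μx²y² + y⁴` (some `μ ≠ ±1/3`); `6x²y² + y⁴`; `6x²y²`; `4x³y`;
and canonical forms from distinct items of this list are never GL₂(ℂ)-equivalent. -/
theorem stmt17 :
    (∀ a b c d e : ℂ, ¬(a = 0 ∧ b = 0 ∧ c = 0 ∧ d = 0 ∧ e = 0) →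
      (QuarticGL2EquivC
          (fun x y => a * x ^ 4 + b * x ^ 3 * y + c * x ^ 2 * y ^ 2 + d * x * y ^ 3 + e * y ^ 4)
          (fun x _y => x ^ 4) ∨
        (∃ μ : ℂ, μ ≠ 1 / 3 ∧ μ ≠ -(1 / 3) ∧
          QuarticGL2EquivC
            (fun x y => a * x ^ 4 + b * x ^ 3 * y + c * x ^ 2 * y ^ 2 + d * x * y ^ 3 + e * y ^ 4)
            (fun x y => x ^ 4 + 6 * μ * x ^ 2 * y ^ 2 + y ^ 4)) ∨
        QuarticGL2EquivC
          (fun x y => a * x ^ 4 + b * x ^ 3 * y + c * x ^ 2 * y ^ 2 + d * x * y ^ 3 + e * y ^ 4)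
          (fun x y => 6 * x ^ 2 * y ^ 2 + y ^ 4) ∨
        QuarticGL2EquivC
          (fun x y => a * x ^ 4 + b * x ^ 3 * y + c * x ^ 2 * y ^ 2 + d * x * y ^ 3 + e * y ^ 4)
          (fun x y => 6 * x ^ 2 * y ^ 2) ∨
        QuarticGL2EquivC
          (fun x y => a * x ^ 4 + b * x ^ 3 * y + c * x ^ 2 * y ^ 2 + d * x * y ^ 3 + e * y ^ 4)
          (fun x y => 4 * x ^ 3 * y))) ∧
    (∀ μ : ℂ, μ ≠ 1 / 3 → μ ≠ -(1 / 3) →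
      ¬ QuarticGL2EquivC (fun x _y => x ^ 4)
        (fun x y => x ^ 4 + 6 * μ * x ^ 2 * y ^ 2 + y ^ 4)) ∧
    ¬ QuarticGL2EquivC (fun x _y => x ^ 4) (fun x y => 6 * x ^ 2 * y ^ 2 + y ^ 4) ∧
    ¬ QuarticGL2EquivC (fun x _y => x ^ 4) (fun x y => 6 * x ^ 2 * y ^ 2) ∧
    ¬ QuarticGL2EquivC (fun x _y => x ^ 4) (fun x y => 4 * x ^ 3 * y) ∧
    (∀ μ : ℂ, μ ≠ 1 / 3 → μ ≠ -(1 / 3) →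
      ¬ QuarticGL2EquivC (fun x y => x ^ 4 + 6 * μ * x ^ 2 * y ^ 2 + y ^ 4)
        (fun x y => 6 * x ^ 2 * y ^ 2 + y ^ 4)) ∧
    (∀ μ : ℂ, μ ≠ 1 / 3 → μ ≠ -(1 / 3) →
      ¬ QuarticGL2EquivC (fun x y => x ^ 4 + 6 * μ * x ^ 2 * y ^ 2 + y ^ 4)
        (fun x y => 6 * x ^ 2 * y ^ 2)) ∧
    (∀ μ : ℂ, μ ≠ 1 / 3 → μ ≠ -(1 / 3) →
      ¬ QuarticGL2EquivC (fun x y => x ^ 4 + 6 * μ * x ^ 2 * y ^ 2 + y ^ 4)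
        (fun x y => 4 * x ^ 3 * y)) ∧
    ¬ QuarticGL2EquivC (fun x y => 6 * x ^ 2 * y ^ 2 + y ^ 4) (fun x y => 6 * x ^ 2 * y ^ 2) ∧
    ¬ QuarticGL2EquivC (fun x y => 6 * x ^ 2 * y ^ 2 + y ^ 4) (fun x y => 4 * x ^ 3 * y) ∧
    ¬ QuarticGL2EquivC (fun x y => 6 * x ^ 2 * y ^ 2) (fun x y => 4 * x ^ 3 * y) := by
  refine ⟨fun a b c d e h => hasCanonicalForm_binaryQuartic h, fun μ hμ₁ hμ₂ => ?_, ?_, ?_, ?_,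
    fun μ hμ₁ hμ₂ => ?_, fun μ hμ₁ hμ₂ => ?_, fun μ hμ₁ hμ₂ => ?_, ?_, ?_,
    not_quarticGL2EquivC_sq_mul_sq_pow_three_mul⟩
  · exact not_quarticGL2EquivC_of_hasIndepZeros_right not_hasIndepZeros_two_pow_four
      ((hasIndepZeros_four_biquadratic hμ₁ hμ₂).mono (by norm_num))
  · exact not_quarticGL2EquivC_of_hasIndepZeros_right not_hasIndepZeros_two_pow_four
      (hasIndepZeros_three_sq_mul_sq_add_pow_four.mono (by norm_num))
  · exact not_quarticGL2EquivC_of_hasIndepZeros_right not_hasIndepZeros_two_pow_four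
      (hasIndepZeros_two_of_eq_zero (by norm_num) (by norm_num))
  · exact not_quarticGL2EquivC_of_hasIndepZeros_right not_hasIndepZeros_two_pow_four
      (hasIndepZeros_two_of_eq_zero (by norm_num) (by norm_num))
  · exact not_quarticGL2EquivC_of_hasIndepZeros_left (hasIndepZeros_four_biquadratic hμ₁ hμ₂)
      not_hasIndepZeros_four_sq_mul_sq_add_pow_four
  · exact not_quarticGL2EquivC_of_hasIndepZeros_left
      ((hasIndepZeros_four_biquadratic hμ₁ hμ₂).mono (by norm_num))
      not_hasIndepZeros_three_sq_mul_sq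
  · exact not_quarticGL2EquivC_of_hasIndepZeros_left
      ((hasIndepZeros_four_biquadratic hμ₁ hμ₂).mono (by norm_num))
      not_hasIndepZeros_three_pow_three_mul
  · exact not_quarticGL2EquivC_of_hasIndepZeros_left hasIndepZeros_three_sq_mul_sq_add_pow_four
      not_hasIndepZeros_three_sq_mul_sq
  · exact not_quarticGL2EquivC_of_hasIndepZeros_left hasIndepZeros_three_sq_mul_sq_add_pow_four
      not_hasIndepZeros_three_pow_three_mul
end
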